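/- arXiv:1306.1572 — 6 statements merged into one kernel-verified Lean document; each statement's English description precedes it below -/
import Mathlib

section
/- Let G be a bicolored multigraph on n vertices with red edge set R and black edge set B, let a, b be positive integers with k = a + b, and suppose |E| = k·n − k. Then the pure condition C_G of the generic [a,b]-frame (tied down at any fixed vertex u) is nonzero as a polynomial if and only if there exists B' ⊆ B such that the edge set R ∪ B' is the disjoint union of a spanning trees and the edge set B \ B' is the disjoint union of b spanning trees. -/
open MvPolynomial

/-- The sub-multigraph with edge set `F` (of a multigraph with endpoint maps
`tail`, `head`) is `(k,ℓ)`-sparse: every nonempty vertex subset `W` induces at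
most `k·|W| − ℓ` edges of `F`. -/
def SparseOn {V E : Type} [DecidableEq V] (tail head : E → V) (k ℓ : ℤ)
    (F : Finset E) : Prop :=
  ∀ W : Finset V, W.Nonempty →
    ((F.filter fun e => tail e ∈ W ∧ head e ∈ W).card : ℤ) ≤ k * (W.card : ℤ) - ℓ

/-- The sub-multigraph with edge set `F` of a bicolored multigraph (red edges are
those with `red e = true`) is `[a,b]`-sparse: there is a subset `B'` of the black
edges of `F` such that the red edges of `F` together with `B'` form an `(a,a)`-sparse
multigraph and the remaining black edges of `F` form a `(b,b)`-sparse multigraph. -/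
def ABSparseOn {V E : Type} [DecidableEq V] [DecidableEq E] (tail head : E → V)
    (red : E → Bool) (a b : ℕ) (F : Finset E) : Prop :=
  ∃ B' ⊆ F.filter fun e => red e = false,
    SparseOn tail head (a : ℤ) (a : ℤ) ((F.filter fun e => red e = true) ∪ B') ∧
    SparseOn tail head (b : ℤ) (b : ℤ) ((F.filter fun e => red e = false) \ B')

/-- `T ⊆ E` is a spanning tree: it has `n − 1` edges and the graph on `Fin n`
with edge set `T` is connected. -/
def IsSpanningTree {n : ℕ} {E : Type} (tail head : E → Fin n) (T : Finset E) : Prop :=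
  T.card = n - 1 ∧
    (SimpleGraph.fromRel fun u v => ∃ e ∈ T, tail e = u ∧ head e = v).Connected

/-- The edge set `F` is the disjoint union of `a` spanning trees. -/
def IsTreePartition {n : ℕ} {E : Type} [DecidableEq E] (tail head : E → Fin n)
    (a : ℕ) (F : Finset E) : Prop :=
  ∃ T : Fin a → Finset E, (∀ i, IsSpanningTree tail head (T i)) ∧
    (∀ i j, i ≠ j → Disjoint (T i) (T j)) ∧ Finset.univ.biUnion T = F

/-- `W` is a proper block of a `(k,k)`-graph on `n` vertices: `2 ≤ |W| < n` and the
induced multigraph on `W` is `(k,k)`-tight (i.e. `(k,k)`-sparse with exactly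
`k·|W| − k` induced edges). -/
def IsProperBlock {n : ℕ} {E : Type} [Fintype E] (tail head : E → Fin n) (k : ℕ)
    (W : Finset (Fin n)) : Prop :=
  2 ≤ W.card ∧ W.card < n ∧
    (∀ W' ⊆ W, W'.Nonempty →
      ((Finset.univ.filter fun e => tail e ∈ W' ∧ head e ∈ W').card : ℤ) ≤
        (k : ℤ) * (W'.card : ℤ) - (k : ℤ)) ∧
    ((Finset.univ.filter fun e => tail e ∈ W ∧ head e ∈ W).card : ℤ) =
      (k : ℤ) * (W.card : ℤ) - (k : ℤ)

/-- The vertex type of the contraction `G/H` by the vertex set `W`: the vertices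
outside `W` together with a single new vertex (`Sum.inr ()`). -/
abbrev ContrV (n : ℕ) (W : Finset (Fin n)) : Type := {v : Fin n // v ∉ W} ⊕ Unit

/-- The projection of the vertices of `G` onto the vertices of `G/H`. -/
def contrMap {n : ℕ} (W : Finset (Fin n)) (v : Fin n) : ContrV n W :=
  if h : v ∈ W then Sum.inr () else Sum.inl ⟨v, h⟩

/-- The pure condition of an `[a,b]`-frame: the determinant of the generic rigidity
matrix with the standard tie-down at `u`.  Rows are indexed by edges `E'` together
with `k` tie-down rows, transported to the column index type `V × Fin k` by the
equivalence `σ`.  The row of an edge `e` has the variable `X (var e, i)` in column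
`(tail e, i)` and its negative in column `(head e, i)`, except that rows of red edges
vanish in all columns `(·, i)` with `a ≤ i`.  The `i`-th tie-down row has a `1` in
column `(u, i)` and `0` elsewhere.  The polynomial lives in
`S = MvPolynomial (E × Fin k) ℝ`, the variables of an edge `e` of the (sub)graph
being indexed via `var e : E`. -/
noncomputable def pureCond {E E' V : Type} [Fintype V] [DecidableEq V] (k a : ℕ)
    (tail head : E' → V) (red : E' → Bool) (var : E' → E) (u : V)
    (σ : (E' ⊕ Fin k) ≃ (V × Fin k)) : MvPolynomial (E × Fin k) ℝ :=
  Matrix.det (Matrix.of fun r c : V × Fin k =>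
    Sum.elim
      (fun e =>
        if red e = true ∧ a ≤ (c.2 : ℕ) then 0
        else if c.1 = tail e then (X (var e, c.2) : MvPolynomial (E × Fin k) ℝ)
        else if c.1 = head e then -X (var e, c.2)
        else 0)
      (fun i => if c = (u, i) then 1 else 0)
      (σ.symm r))

/-- The pure condition of a `k`-frame (uncolored body-and-bar setting): the
determinant of the generic rigidity matrix with the standard tie-down at `u`. -/
noncomputable def pureCondBar {E E' V : Type} [Fintype V] [DecidableEq V] (k : ℕ)
    (tail head : E' → V) (var : E' → E) (u : V)
    (σ : (E' ⊕ Fin k) ≃ (V × Fin k)) : MvPolynomial (E × Fin k) ℝ :=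
  pureCond k k tail head (fun _ => false) var u σ

/-- The rigidity matrix `M(G(p))` of an `[a,b]`-frame evaluated at the point `p`
(no tie-down rows). -/
def rigidityMatrixR {E : Type} {n k : ℕ} (a : ℕ) (tail head : E → Fin n)
    (red : E → Bool) (p : E × Fin k → ℝ) : Matrix E (Fin n × Fin k) ℝ :=
  Matrix.of fun e c =>
    if red e = true ∧ a ≤ (c.2 : ℕ) then 0
    else if c.1 = tail e then p (e, c.2)
    else if c.1 = head e then -p (e, c.2)
    else 0

/-- The edge `e` is in the support of the polynomial `f`: some variable `X (e, i)`
occurs in `f`. -/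
def InSupport {E : Type} [DecidableEq E] {k : ℕ} (f : MvPolynomial (E × Fin k) ℝ)
    (e : E) : Prop :=
  ∃ i : Fin k, (e, i) ∈ f.vars

/-- `p` is a generic point of `V(f)`: `f` vanishes at `p` and every polynomial
vanishing at `p` is divisible by `f`. -/
def GenericOn {E : Type} {k : ℕ} (f : MvPolynomial (E × Fin k) ℝ)
    (p : E × Fin k → ℝ) : Prop :=
  eval p f = 0 ∧ ∀ h : MvPolynomial (E × Fin k) ℝ, eval p h = 0 → f ∣ h

/-- A bicolored multigraph is an `[a,b]`-circuit if it is not `[a,b]`-sparse but every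
proper subset of its edge set is `[a,b]`-sparse. -/
def ABCircuit {V E : Type} [Fintype E] [DecidableEq V] [DecidableEq E]
    (tail head : E → V) (red : E → Bool) (a b : ℕ) : Prop :=
  ¬ ABSparseOn tail head red a b (Finset.univ : Finset E) ∧
    ∀ F : Finset E, F ⊂ Finset.univ → ABSparseOn tail head red a b F

/-- An `[a,b]`-graph is irreducible if for every edge `e₀`, adding a new edge parallel
to `e₀` with the same endpoints and color yields an `[a,b]`-circuit. -/
def ABIrreducibleGraph {V E : Type} [Fintype E] [DecidableEq V] [DecidableEq E]
    (tail head : E → V) (red : E → Bool) (a b : ℕ) : Prop :=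
  ∀ e₀ : E,
    ABCircuit (Sum.elim tail fun _ : Unit => tail e₀)
      (Sum.elim head fun _ : Unit => head e₀)
      (Sum.elim red fun _ : Unit => red e₀) a b

/-- The out-degree of the vertex `v` under the orientation `o` (`o e = true` means `e`
is directed from `tail e` to `head e`, `o e = false` the reverse). -/
def outDeg {n : ℕ} {E : Type} [Fintype E] (tail head : E → Fin n) (o : E → Bool)
    (v : Fin n) : ℕ :=
  (Finset.univ.filter fun e =>
    (o e = true ∧ tail e = v) ∨ (o e = false ∧ head e = v)).card

/-- The orientation `o` has a directed cycle (polygon): a nonempty closed walk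
traversing distinct edges, each in its assigned direction. -/
def HasDirCycle {n : ℕ} {E : Type} (tail head : E → Fin n) (o : E → Bool) : Prop :=
  ∃ m : ℕ, 0 < m ∧ ∃ (es : Fin m → E) (vs : Fin (m + 1) → Fin n),
    Function.Injective es ∧ vs 0 = vs (Fin.last m) ∧
    ∀ j : Fin m,
      (o (es j) = true ∧ tail (es j) = vs j.castSucc ∧ head (es j) = vs j.succ) ∨
      (o (es j) = false ∧ head (es j) = vs j.castSucc ∧ tail (es j) = vs j.succ)

/-!
Over `ℝ` the pure condition is nonzero iff the tied-down rigidity matrix is nonsingular at some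
point `p`. The row of an edge `e` is linear in its coordinates `p (e, ·)`, so expanding the
determinant multilinearly in the edge rows reduces to the `0/1` points at which every edge `e`
carries a single colour `ψ e ∈ Fin (a + b)`. At such a point, `x` lies in the kernel iff for every
colour `i` the function `x (·, i)` vanishes at `u` and is constant along the edges of colour `i`,
while a red edge of colour `≥ a` gives a zero row. So the matrix is nonsingular iff no red edge has
colour `≥ a` and every colour class is connected; as the `a + b` classes share `(a + b)(n - 1)`
edges, each class is then a spanning tree. Colours `< a` give the `a` trees on `R ∪ B'`, colours
`≥ a` the `b` trees on `B \ B'`.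
-/

open Finset Matrix

namespace Matrix

theorem det_fromRows_submatrix_eq_currySum {m₁ m₂ n R : Type*} [Fintype m₁] [Fintype m₂]
    [DecidableEq m₁] [DecidableEq m₂] [Fintype n] [DecidableEq n] [CommRing R]
    (σ : m₁ ⊕ m₂ ≃ n) (A : Matrix m₁ n R) (B : Matrix m₂ n R) :
    ((fromRows A B).submatrix σ.symm id).det =
      (detRowAlternating : (m₁ ⊕ m₂ → R) [⋀^(m₁ ⊕ m₂)]→ₗ[R] R).toMultilinearMap.currySum
        (fun i => A i ∘ σ) (fun j => B j ∘ σ) := by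
  rw [← det_submatrix_equiv_self σ, submatrix_submatrix]
  simp only [Equiv.symm_comp_self, MultilinearMap.currySum_apply']
  congr 1
  ext (i | j) c <;> rfl

theorem det_fromRows_submatrix_sum_smul {m₁ m₂ n κ R : Type*} [Fintype m₁] [Fintype m₂]
    [DecidableEq m₁] [DecidableEq m₂] [Fintype n] [DecidableEq n] [Fintype κ]
    [CommRing R] (σ : m₁ ⊕ m₂ ≃ n) (c : m₁ → κ → R) (v : m₁ → κ → n → R)
    (B : Matrix m₂ n R) :
    ((fromRows (of fun i => ∑ j, c i j • v i j) B).submatrix σ.symm id).det =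
      ∑ f : m₁ → κ, (∏ i, c i (f i)) *
        ((fromRows (of fun i => v i (f i)) B).submatrix σ.symm id).det := by
  simp only [det_fromRows_submatrix_eq_currySum]
  have : (fun i => (of fun i => ∑ j, c i j • v i j) i ∘ σ) =
      fun i => ∑ j, c i j • (v i j ∘ σ) := by
    ext i d; simp
  rw [this, MultilinearMap.map_sum, _root_.sum_apply]
  refine Finset.sum_congr rfl fun f _ => ?_
  rw [MultilinearMap.map_smul_univ, _root_.smul_apply, smul_eq_mul]
  rfl

end Matrix

section EdgeGraph
variable {V E : Type*} (tail head : E → V)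

def edgeGraph (T : Finset E) : SimpleGraph V :=
  SimpleGraph.fromRel fun v w => ∃ e ∈ T, tail e = v ∧ head e = w

variable {tail head}

lemma eq_of_edgeGraph_reachable {T : Finset E} {R : Type*} {x : V → R}
    (hx : ∀ e ∈ T, x (tail e) = x (head e)) {v w : V}
    (h : (edgeGraph tail head T).Reachable v w) : x v = x w := by
  obtain ⟨p⟩ := h
  induction p with
  | nil => rfl
  | cons hadj _ ih =>
    obtain ⟨-, ⟨e, he, rfl, rfl⟩ | ⟨e, he, rfl, rfl⟩⟩ := hadj
    · rw [hx e he, ih]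
    · rw [← hx e he, ih]

theorem edgeGraph_connected_iff {T : Finset E} (u : V) {R : Type*} [Zero R] [Nontrivial R] :
    (edgeGraph tail head T).Connected ↔
      ∀ x : V → R, x u = 0 → (∀ e ∈ T, x (tail e) = x (head e)) → x = 0 := by
  classical
  constructor
  · intro hconn x hu hx
    funext v
    rw [← eq_of_edgeGraph_reachable hx (hconn u v), hu, Pi.zero_apply]
  · intro hker
    have : Nonempty V := ⟨u⟩
    rw [SimpleGraph.connected_iff_exists_forall_reachable]
    refine ⟨u, fun v => ?_⟩
    obtain ⟨y, hy⟩ := exists_ne (0 : R)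
    by_contra huv
    have := congrFun (hker (fun w => if (edgeGraph tail head T).Reachable u w then 0 else y)
      (by simp) fun e he => ?_) v
    · simp [huv, hy] at this
    by_cases htail : tail e = head e
    · rw [htail]
    have hadj : (edgeGraph tail head T).Adj (tail e) (head e) :=
      ⟨htail, Or.inl ⟨e, he, rfl, rfl⟩⟩
    have hiff : (edgeGraph tail head T).Reachable u (tail e) ↔
        (edgeGraph tail head T).Reachable u (head e) :=
      ⟨fun h => h.trans hadj.reachable, fun h => h.trans hadj.symm.reachable⟩
    simp only [hiff]

theorem card_sub_one_le_of_connected_edgeGraph [Fintype V] {T : Finset E}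
    (h : (edgeGraph tail head T).Connected) : Fintype.card V - 1 ≤ #T := by
  classical
  have hcard := h.card_vert_le_card_edgeSet_add_one
  let ends : E → Sym2 V := fun e => s(tail e, head e)
  have hsub : (edgeGraph tail head T).edgeSet ⊆ ↑(T.image ends) := by
    intro z hz
    induction z using Sym2.ind with
    | h v w =>
      obtain ⟨-, ⟨e, he, rfl, rfl⟩ | ⟨e, he, rfl, rfl⟩⟩ := hz
      · exact mem_image_of_mem ends he
      · simpa [ends, Sym2.eq_swap] using mem_image_of_mem ends he
  have hle := Set.ncard_le_ncard hsub (Finset.finite_toSet _)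
  rw [Set.ncard_coe_finset] at hle
  rw [Nat.card_eq_fintype_card, Nat.card_coe_set_eq] at hcard
  have := card_image_le (s := T) (f := ends)
  omega

end EdgeGraph

section TreePartition
variable {n : ℕ} {E : Type} (tail head : E → Fin n)

theorem exists_forall_eq_iff_mem {ι E : Type*} {T : ι → Finset E}
    (hdisj : Pairwise fun i j => Disjoint (T i) (T j)) (hcover : ∀ e, ∃ i, e ∈ T i) :
    ∃ φ : E → ι, ∀ e i, φ e = i ↔ e ∈ T i := by
  choose φ hφ using hcover
  refine ⟨φ, fun e i => ⟨fun h => h ▸ hφ e, fun he => ?_⟩⟩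
  by_contra hne
  exact disjoint_left.mp (hdisj hne) (hφ e) he

variable [Fintype E]

theorem isSpanningTree_fiber_of_connected {k : ℕ} (ψ : E → Fin k)
    (hE : Fintype.card E = k * n - k)
    (hconn : ∀ i, (edgeGraph tail head (univ.filter fun e => ψ e = i)).Connected) (i : Fin k) :
    IsSpanningTree tail head (univ.filter fun e => ψ e = i) := by
  have hle : ∀ i, n - 1 ≤ #(univ.filter fun e => ψ e = i) := fun i => by
    simpa using card_sub_one_le_of_connected_edgeGraph (hconn i)
  have hsum : ∑ _i : Fin k, (n - 1) = ∑ i, #(univ.filter fun e => ψ e = i) := by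
    rw [← card_eq_sum_card_fiberwise fun e _ => mem_univ (ψ e), card_univ, hE, sum_const,
      card_univ, Fintype.card_fin, smul_eq_mul, Nat.mul_sub_one]
  exact ⟨((sum_eq_sum_iff_of_le fun i _ => hle i).1 hsum i (mem_univ i)).symm, hconn i⟩

variable [DecidableEq E]

theorem isTreePartition_of_fibers {ι : Type*} [DecidableEq ι] {a : ℕ} (ψ : E → ι)
    {g : Fin a → ι} (hg : Function.Injective g)
    (htree : ∀ i, IsSpanningTree tail head (univ.filter fun e => ψ e = g i))
    {F : Finset E} (hF : ∀ e, e ∈ F ↔ ∃ i, ψ e = g i) :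
    IsTreePartition tail head a F :=
  ⟨fun i => univ.filter fun e => ψ e = g i, htree,
    fun _ _ hij => disjoint_filter.2 fun _ _ h₁ h₂ => hij (hg (h₁.symm.trans h₂)),
    by ext e; simp [hF]⟩

theorem mem_red_union_iff_not_mem_black_sdiff (red : E → Bool) (B' : Finset E) (e : E) :
    e ∈ (univ.filter fun e => red e = true) ∪ B' ↔
      e ∉ (univ.filter fun e => red e = false) \ B' := by
  cases hr : red e <;> simp [hr]

theorem exists_treePartitions_of_treeColoring {a b : ℕ} {red : E → Bool} (ψ : E → Fin (a + b))
    (hred : ∀ e, red e = true → (ψ e : ℕ) < a)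
    (htree : ∀ i, IsSpanningTree tail head (univ.filter fun e => ψ e = i)) :
    ∃ B' ⊆ univ.filter fun e => red e = false,
      IsTreePartition tail head a ((univ.filter fun e => red e = true) ∪ B') ∧
      IsTreePartition tail head b ((univ.filter fun e => red e = false) \ B') := by
  have hlt : ∀ e, (∃ i, ψ e = Fin.castAdd b i) ↔ (ψ e : ℕ) < a := fun e =>
    ⟨by rintro ⟨i, hi⟩; rw [hi]; exact i.2, fun h => ⟨⟨ψ e, h⟩, rfl⟩⟩
  have hge : ∀ e, (∃ j, ψ e = Fin.natAdd a j) ↔ a ≤ (ψ e : ℕ) := fun e =>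
    ⟨by rintro ⟨j, hj⟩; rw [hj]; simp,
      fun h => ⟨⟨ψ e - a, by omega⟩, Fin.ext (by simp; omega)⟩⟩
  refine ⟨(univ.filter fun e => red e = false).filter fun e => (ψ e : ℕ) < a,
    filter_subset _ _,
    isTreePartition_of_fibers tail head ψ (Fin.castAdd_injective a b) (fun _ => htree _)
      fun e => ?_,
    isTreePartition_of_fibers tail head ψ (Fin.natAdd_injective b a) (fun _ => htree _)
      fun e => ?_⟩
  · simp only [hlt, mem_union, mem_filter, mem_univ, true_and]
    cases hr : red e <;> simp [hred e, hr]
  · simp only [hge, mem_sdiff, mem_filter, mem_univ, true_and]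
    cases hr : red e <;> simp [hred e, hr]

theorem exists_treeColoring_of_treePartitions {a b : ℕ} {red : E → Bool} {B' : Finset E}
    (hR : IsTreePartition tail head a ((univ.filter fun e => red e = true) ∪ B'))
    (hB : IsTreePartition tail head b ((univ.filter fun e => red e = false) \ B')) :
    ∃ ψ : E → Fin (a + b), (∀ e, red e = true → (ψ e : ℕ) < a) ∧
      ∀ i, IsSpanningTree tail head (univ.filter fun e => ψ e = i) := by
  obtain ⟨T, hT, hTdisj, hTunion⟩ := hR
  obtain ⟨U, hU, hUdisj, hUunion⟩ := hB
  have hTU : ∀ i j, Disjoint (T i) (U j) := fun i j =>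
    disjoint_left.2 fun e hi hj => (mem_red_union_iff_not_mem_black_sdiff red B' e).1
      (hTunion ▸ mem_biUnion.2 ⟨i, mem_univ _, hi⟩) (hUunion ▸ mem_biUnion.2 ⟨j, mem_univ _, hj⟩)
  have hdisj : Pairwise fun c c' => Disjoint (Sum.elim T U c) (Sum.elim T U c') := by
    rintro (i | j) (i' | j') hne
    · exact hTdisj i i' fun h => hne (congrArg _ h)
    · exact hTU i j'
    · exact (hTU i' j).symm
    · exact hUdisj j j' fun h => hne (congrArg _ h)
  have hcover : ∀ e, ∃ c, e ∈ Sum.elim T U c := by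
    intro e
    by_cases he : e ∈ (univ.filter fun e => red e = true) ∪ B'
    · obtain ⟨i, -, hi⟩ := mem_biUnion.1 (hTunion ▸ he)
      exact ⟨.inl i, hi⟩
    · rw [mem_red_union_iff_not_mem_black_sdiff, not_not, ← hUunion, mem_biUnion] at he
      obtain ⟨j, -, hj⟩ := he
      exact ⟨.inr j, hj⟩
  obtain ⟨φ, hφ⟩ := exists_forall_eq_iff_mem hdisj hcover
  refine ⟨finSumFinEquiv ∘ φ, fun e hre => ?_, fun c => ?_⟩
  · obtain ⟨i, -, hi⟩ : ∃ i ∈ univ, e ∈ T i := by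
      rw [← mem_biUnion, hTunion]; simp [hre]
    simp [(hφ e (.inl i)).2 hi]
  · obtain ⟨j, rfl⟩ := finSumFinEquiv.surjective c
    have hfiber : (univ.filter fun e => (finSumFinEquiv ∘ φ) e = finSumFinEquiv j) =
        Sum.elim T U j := by
      ext e; simp [hφ]
    rw [hfiber]
    rcases j with i | j
    exacts [hT i, hU j]

theorem exists_treeColoring_iff {a b : ℕ} (red : E → Bool) :
    (∃ ψ : E → Fin (a + b), (∀ e, red e = true → (ψ e : ℕ) < a) ∧
        ∀ i, IsSpanningTree tail head (univ.filter fun e => ψ e = i)) ↔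
      ∃ B' ⊆ univ.filter fun e => red e = false,
        IsTreePartition tail head a ((univ.filter fun e => red e = true) ∪ B') ∧
        IsTreePartition tail head b ((univ.filter fun e => red e = false) \ B') :=
  ⟨fun ⟨ψ, hred, htree⟩ => exists_treePartitions_of_treeColoring tail head ψ hred htree,
    fun ⟨_, _, hR, hB⟩ => exists_treeColoring_of_treePartitions tail head hR hB⟩

end TreePartition

section Rigidity
variable {n k : ℕ} {E : Type} (a : ℕ) (tail head : E → Fin n) (red : E → Bool)
  (u : Fin n) (σ : (E ⊕ Fin k) ≃ (Fin n × Fin k))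

def tieDown : Matrix (Fin k) (Fin n × Fin k) ℝ :=
  Matrix.of fun t => Pi.single (u, t) 1

def tiedRigidityMatrix (p : E × Fin k → ℝ) : Matrix (Fin n × Fin k) (Fin n × Fin k) ℝ :=
  (Matrix.fromRows (rigidityMatrixR a tail head red p) (tieDown u)).submatrix σ.symm id

def colorPoint (ψ : E → Fin k) : E × Fin k → ℝ := fun q => if ψ q.1 = q.2 then 1 else 0

variable {a tail head red u σ}

theorem eval_pureCond (p : E × Fin k → ℝ) :
    eval p (pureCond k a tail head red id u σ) =
      (tiedRigidityMatrix a tail head red u σ p).det := by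
  rw [pureCond, RingHom.map_det]
  congr 1
  ext r c
  obtain ⟨e | t, rfl⟩ := σ.surjective r
  · simp only [RingHom.mapMatrix_apply, Matrix.map_apply, Matrix.of_apply, tiedRigidityMatrix,
      Matrix.submatrix_apply, Equiv.symm_apply_apply, Matrix.fromRows_apply_inl, Sum.elim_inl,
      rigidityMatrixR, id]
    split_ifs <;> simp
  · simp only [RingHom.mapMatrix_apply, Matrix.map_apply, Matrix.of_apply, tiedRigidityMatrix,
      Matrix.submatrix_apply, Equiv.symm_apply_apply, Matrix.fromRows_apply_inr, Sum.elim_inr,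
      tieDown, id, Pi.single_apply]
    split_ifs <;> simp

theorem pureCond_ne_zero_iff :
    pureCond k a tail head red id u σ ≠ 0 ↔
      ∃ p, (tiedRigidityMatrix a tail head red u σ p).det ≠ 0 := by
  simp [MvPolynomial.funext_iff, eval_pureCond]

theorem rigidityMatrixR_apply_eq_sum (p : E × Fin k → ℝ) (e : E) :
    rigidityMatrixR a tail head red p e =
      ∑ i, p (e, i) • rigidityMatrixR a tail head red (colorPoint fun _ => i) e := by
  ext c
  simp [rigidityMatrixR, colorPoint, Finset.sum_apply]

theorem rigidityMatrixR_colorPoint_apply (hloop : ∀ e, tail e ≠ head e) (ψ : E → Fin k) (e : E) :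
    rigidityMatrixR a tail head red (colorPoint ψ) e =
      if red e = true ∧ a ≤ (ψ e : ℕ) then 0
      else Pi.single (tail e, ψ e) 1 - Pi.single (head e, ψ e) 1 := by
  ext ⟨v, i⟩
  simp only [rigidityMatrixR, colorPoint, of_apply]
  by_cases hi : ψ e = i
  · subst hi
    have := hloop e
    split_ifs <;> simp_all
  · split_ifs <;> simp_all [Ne.symm hi]

theorem rigidityMatrixR_colorPoint_mulVec (hloop : ∀ e, tail e ≠ head e) (ψ : E → Fin k)
    (x : Fin n × Fin k → ℝ) (e : E) :
    (rigidityMatrixR a tail head red (colorPoint ψ) *ᵥ x) e =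
      if red e = true ∧ a ≤ (ψ e : ℕ) then 0 else x (tail e, ψ e) - x (head e, ψ e) := by
  rw [mulVec, rigidityMatrixR_colorPoint_apply hloop]
  split_ifs
  · exact zero_dotProduct x
  · rw [sub_dotProduct, single_dotProduct, single_dotProduct, one_mul, one_mul]

theorem tiedRigidityMatrix_colorPoint_mulVec_eq_zero_iff (hloop : ∀ e, tail e ≠ head e)
    (ψ : E → Fin k) (x : Fin n × Fin k → ℝ) :
    tiedRigidityMatrix a tail head red u σ (colorPoint ψ) *ᵥ x = 0 ↔
      (∀ e, ¬ (red e = true ∧ a ≤ (ψ e : ℕ)) → x (tail e, ψ e) = x (head e, ψ e)) ∧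
        ∀ t, x (u, t) = 0 := by
  have hcomp : tiedRigidityMatrix a tail head red u σ (colorPoint ψ) *ᵥ x =
      Sum.elim (rigidityMatrixR a tail head red (colorPoint ψ) *ᵥ x) (tieDown u *ᵥ x) ∘ σ.symm := by
    rw [← Matrix.fromRows_mulVec]; rfl
  rw [hcomp, Equiv.comp_symm_eq, Pi.zero_comp]
  simp only [funext_iff, Sum.forall, Sum.elim_inl, Sum.elim_inr, Pi.zero_apply,
    rigidityMatrixR_colorPoint_mulVec hloop]
  simp [tieDown, mulVec, sub_eq_zero]

variable [Fintype E]

theorem det_tiedRigidityMatrix_colorPoint_ne_zero_iff (hloop : ∀ e, tail e ≠ head e)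
    (ψ : E → Fin k) :
    (tiedRigidityMatrix a tail head red u σ (colorPoint ψ)).det ≠ 0 ↔
      (∀ e, red e = true → (ψ e : ℕ) < a) ∧
        ∀ i, (edgeGraph tail head (univ.filter fun e => ψ e = i)).Connected := by
  simp only [edgeGraph_connected_iff u (R := ℝ)]
  constructor
  · intro hdet
    refine ⟨fun e hre => ?_, fun i y hyu hy => ?_⟩
    · by_contra hge
      refine hdet (det_eq_zero_of_row_eq_zero (σ (.inl e)) fun c => ?_)
      simp [tiedRigidityMatrix, rigidityMatrixR_colorPoint_apply hloop, hre, not_lt.mp hge]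
    · by_contra hy0
      refine hdet (exists_mulVec_eq_zero_iff.mp ⟨fun c => if c.2 = i then y c.1 else 0, ?_, ?_⟩)
      · obtain ⟨v, hv⟩ := Function.ne_iff.mp hy0
        exact Function.ne_iff.mpr ⟨(v, i), by simpa using hv⟩
      rw [tiedRigidityMatrix_colorPoint_mulVec_eq_zero_iff hloop]
      refine ⟨fun e _ => ?_, fun t => ?_⟩
      · by_cases hi : ψ e = i
        · simp [hi, hy e (by simp [hi])]
        · simp [hi]
      · by_cases ht : t = i <;> simp [ht, hyu]
  · rintro ⟨hred, hconn⟩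
    rw [Ne, ← exists_mulVec_eq_zero_iff]
    rintro ⟨x, hx0, hx⟩
    rw [tiedRigidityMatrix_colorPoint_mulVec_eq_zero_iff hloop] at hx
    refine hx0 (funext fun c => congrFun (hconn c.2 (fun v => x (v, c.2)) (hx.2 c.2) ?_) c.1)
    intro e he
    rw [mem_filter] at he
    rw [← he.2]
    exact hx.1 e fun h => (hred e h.1).not_ge h.2

variable [DecidableEq E]

theorem det_tiedRigidityMatrix_eq_sum (p : E × Fin k → ℝ) :
    (tiedRigidityMatrix a tail head red u σ p).det =
      ∑ ψ : E → Fin k, (∏ e, p (e, ψ e)) *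
        (tiedRigidityMatrix a tail head red u σ (colorPoint ψ)).det := by
  have hrows : rigidityMatrixR a tail head red p = Matrix.of fun e =>
      ∑ i, p (e, i) • rigidityMatrixR a tail head red (colorPoint fun _ => i) e := by
    funext e; exact rigidityMatrixR_apply_eq_sum p e
  rw [tiedRigidityMatrix, hrows, Matrix.det_fromRows_submatrix_sum_smul]
  rfl

theorem exists_det_tiedRigidityMatrix_ne_zero_iff :
    (∃ p, (tiedRigidityMatrix a tail head red u σ p).det ≠ 0) ↔
      ∃ ψ : E → Fin k, (tiedRigidityMatrix a tail head red u σ (colorPoint ψ)).det ≠ 0 := by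
  refine ⟨fun ⟨p, hp⟩ => ?_, fun ⟨ψ, hψ⟩ => ⟨_, hψ⟩⟩
  rw [det_tiedRigidityMatrix_eq_sum] at hp
  obtain ⟨ψ, -, hψ⟩ := Finset.exists_ne_zero_of_sum_ne_zero hp
  exact ⟨ψ, right_ne_zero_of_mul hψ⟩

end Rigidity

theorem stmt0_general {n : ℕ} {E : Type} [Fintype E] [DecidableEq E]
    (tail head : E → Fin n) (hlt : ∀ e, tail e < head e)
    (red : E → Bool) (a b : ℕ)
    (hE : Fintype.card E = (a + b) * n - (a + b)) (u : Fin n)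
    (σ : (E ⊕ Fin (a + b)) ≃ (Fin n × Fin (a + b))) :
    pureCond (a + b) a tail head red id u σ ≠ 0 ↔
      ∃ B' ⊆ Finset.univ.filter fun e => red e = false,
        IsTreePartition tail head a ((Finset.univ.filter fun e => red e = true) ∪ B') ∧
        IsTreePartition tail head b ((Finset.univ.filter fun e => red e = false) \ B') := by
  have hloop : ∀ e, tail e ≠ head e := fun e => (hlt e).ne
  rw [pureCond_ne_zero_iff, exists_det_tiedRigidityMatrix_ne_zero_iff, ← exists_treeColoring_iff]
  refine exists_congr fun ψ => ?_
  rw [det_tiedRigidityMatrix_colorPoint_ne_zero_iff hloop]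
  exact and_congr_right fun _ =>
    ⟨isSpanningTree_fiber_of_connected tail head ψ hE, fun h i => (h i).2⟩

/-- the pure condition of the generic `[a,b]`-frame, tied down at `u`,
is nonzero iff there is `B' ⊆ B` with `R ∪ B'` the disjoint union of `a` spanning
trees and `B \ B'` the disjoint union of `b` spanning trees. -/
theorem stmt0 {n : ℕ} {E : Type} [Fintype E] [DecidableEq E]
    (tail head : E → Fin n) (hlt : ∀ e, tail e < head e)
    (red : E → Bool) (a b : ℕ) (ha : 0 < a) (hb : 0 < b)
    (hE : Fintype.card E = (a + b) * n - (a + b)) (u : Fin n)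
    (σ : (E ⊕ Fin (a + b)) ≃ (Fin n × Fin (a + b))) :
    pureCond (a + b) a tail head red id u σ ≠ 0 ↔
      ∃ B' ⊆ Finset.univ.filter fun e => red e = false,
        IsTreePartition tail head a ((Finset.univ.filter fun e => red e = true) ∪ B') ∧
        IsTreePartition tail head b ((Finset.univ.filter fun e => red e = false) \ B') :=
  stmt0_general tail head hlt red a b hE u σ
end

section
/- Let G be a bicolored multigraph on n vertices with red edge set R and black edge set B, let a, b be positive integers with k = a + b, and suppose |E| = k·n − k. Then G is [a,b]-tight if and only if there exists B' ⊆ B such that the edge set R ∪ B' is the disjoint union of a spanning trees and the edge set B \ B' is the disjoint union of b spanning trees. -/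
open MvPolynomial

/-!
Both sides split the edges along the same partition `R ∪ B'`, `B \ B'`, and the edge count
forces `|R ∪ B'| = a(n-1)` and `|B \ B'| = b(n-1)`. The theorem thus reduces to the
Nash-Williams–Tutte theorem: a `(k,k)`-sparse multigraph with `k(n-1)` edges is the disjoint
union of `k` spanning trees (the converse holds because a forest induces at most `|W| - 1` edges
on `W`).

The decomposition into forests is built one edge `e₀` at a time, as in the matroid union
theorem. Call `f` an exchange for `e` if `f` lies on the cycle that `e` closes in some forest.
If an edge reachable from `e₀` by exchanges fits into some forest, performing the exchanges
along a shortest such sequence inserts `e₀`. Otherwise every forest connects the vertex set `U`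
spanned by the reachable edges, so `U` induces `k(|U|-1) + 1` edges, contradicting sparsity.
-/

open Finset Function

lemma SparseOn.mono {V E : Type} [DecidableEq V] {tl hd : E → V} {k ℓ : ℤ} {S T : Finset E}
    (hST : S ⊆ T) (hT : SparseOn tl hd k ℓ T) : SparseOn tl hd k ℓ S :=
  fun W hW => le_trans (by gcongr) (hT W hW)

lemma SparseOn.card_le {V E : Type} [Fintype V] [Nonempty V] [DecidableEq V] {tl hd : E → V}
    {k ℓ : ℤ} {S : Finset E} (hS : SparseOn tl hd k ℓ S) :
    (#S : ℤ) ≤ k * Fintype.card V - ℓ := by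
  simpa using hS univ univ_nonempty

lemma pairwise_disjoint_update {ι α : Type*} [DecidableEq ι] [PartialOrder α] [OrderBot α]
    {F : ι → α} (hF : Pairwise (Disjoint on F)) {i : ι} {x : α}
    (hx : ∀ j ≠ i, Disjoint x (F j)) : Pairwise (Disjoint on update F i x) := by
  intro j j' hjj'
  simp only [onFun, update_apply]
  split_ifs with hj hj'
  · exact absurd (hj.trans hj'.symm) hjj'
  · exact hx j' hj'
  · exact (hx j hj).symm
  · exact hF hjj'

lemma SimpleGraph.Reachable.exists_adj_dist_add_one {V : Type*} {G : SimpleGraph V} {u v : V}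
    (h : G.Reachable u v) (hne : u ≠ v) : ∃ w, G.Adj w v ∧ G.dist u w + 1 = G.dist u v := by
  obtain ⟨p, hp⟩ := h.exists_walk_length_eq_dist
  have hnil : ¬ p.Nil := fun h => hne h.eq
  have hadj := SimpleGraph.Walk.adj_penultimate hnil
  have hle : G.dist u p.penultimate ≤ p.length - 1 :=
    p.length_dropLast ▸ SimpleGraph.dist_le p.dropLast
  have hge : G.dist u v ≤ G.dist u p.penultimate + 1 :=
    (SimpleGraph.dist_eq_one_iff_adj.mpr hadj) ▸ hadj.reachable.dist_triangle_right u
  have hpos : 0 < p.length := SimpleGraph.Walk.not_nil_iff_lt_length.mp hnil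
  exact ⟨p.penultimate, hadj, by omega⟩

namespace Multigraph

variable {V E : Type} (tl hd : E → V)

/-- The graph of `IsSpanningTree`; loops and parallel edges of `A` collapse in it. -/
def edgeGraph (A : Finset E) : SimpleGraph V :=
  SimpleGraph.fromRel fun u v => ∃ e ∈ A, tl e = u ∧ hd e = v

def Spans (A : Finset E) (e : E) : Prop :=
  (edgeGraph tl hd A).Reachable (tl e) (hd e)

def IsForest [DecidableEq E] (A : Finset E) : Prop :=
  ∀ e ∈ A, ¬ Spans tl hd (A.erase e) e

variable {tl hd}

lemma edgeGraph_mono {A B : Finset E} (hAB : A ⊆ B) : edgeGraph tl hd A ≤ edgeGraph tl hd B :=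
  fun _ _ ⟨hne, h⟩ => ⟨hne, h.imp (fun ⟨e, he, h⟩ => ⟨e, hAB he, h⟩)
    (fun ⟨e, he, h⟩ => ⟨e, hAB he, h⟩)⟩

lemma reachable_of_mem {A : Finset E} {e : E} (he : e ∈ A) :
    (edgeGraph tl hd A).Reachable (tl e) (hd e) := by
  by_cases h : tl e = hd e
  · rw [h]
  · exact SimpleGraph.Adj.reachable ⟨h, Or.inl ⟨e, he, rfl, rfl⟩⟩

lemma spans_of_mem {A : Finset E} {e : E} (he : e ∈ A) : Spans tl hd A e :=
  reachable_of_mem he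

lemma Spans.mono {A B : Finset E} (hAB : A ⊆ B) {e : E} (h : Spans tl hd A e) :
    Spans tl hd B e :=
  SimpleGraph.Reachable.mono (edgeGraph_mono hAB) h

lemma reachable_of_forall_spans {A B : Finset E} (hB : ∀ f ∈ B, Spans tl hd A f) {u v : V}
    (h : (edgeGraph tl hd B).Reachable u v) : (edgeGraph tl hd A).Reachable u v := by
  rw [SimpleGraph.reachable_iff_reflTransGen] at h
  induction h with
  | refl => rfl
  | tail _ hadj ih =>
    obtain ⟨-, ⟨f, hf, rfl, rfl⟩ | ⟨f, hf, rfl, rfl⟩⟩ := hadj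
    · exact ih.trans (hB f hf)
    · exact ih.trans (hB f hf).symm

lemma reachable_tl_iff_reachable_hd {A : Finset E} {f : E} (hf : f ∈ A) (x : V) :
    (edgeGraph tl hd A).Reachable x (tl f) ↔ (edgeGraph tl hd A).Reachable x (hd f) :=
  ⟨fun h => h.trans (reachable_of_mem hf), fun h => h.trans (reachable_of_mem hf).symm⟩

lemma endpoints_mem_filter {p : V → Prop} [DecidablePred p] {A : Finset E} {W : Finset V}
    (hp : ∀ f ∈ A, p (tl f) ↔ p (hd f)) (hAW : ∀ f ∈ A, tl f ∈ W ∧ hd f ∈ W) :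
    ∀ f ∈ A.filter (fun f => p (tl f)), tl f ∈ W.filter p ∧ hd f ∈ W.filter p := by
  intro f hf
  simp only [mem_filter] at hf ⊢
  grind

/-- Every vertex `u ≠ u₀` of `U` is the far end of the last edge of a shortest path from `u₀`
to `u`, so sending each edge to its end farther from `u₀` covers `U \ {u₀}`. -/
lemma card_le_card_filter_add_one_of_reachable [DecidableEq V] {A : Finset E} {U : Finset V}
    {u₀ : V} (hU : ∀ u ∈ U, (edgeGraph tl hd A).Reachable u₀ u) :
    #U ≤ #{f ∈ A | tl f ∈ U ∨ hd f ∈ U} + 1 := by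
  set d : V → ℕ := (edgeGraph tl hd A).dist u₀
  have hlast : ∀ u ∈ U.erase u₀, ∃ f ∈ A,
      (tl f = u ∧ d (hd f) + 1 = d u) ∨ (hd f = u ∧ d (tl f) + 1 = d u) := by
    intro u hu
    obtain ⟨hne, hu⟩ := mem_erase.mp hu
    obtain ⟨w, ⟨-, ⟨f, hf, rfl, rfl⟩ | ⟨f, hf, rfl, rfl⟩⟩, hw⟩ :=
      (hU u hu).exists_adj_dist_add_one (Ne.symm hne)
    · exact ⟨f, hf, Or.inr ⟨rfl, hw⟩⟩
    · exact ⟨f, hf, Or.inl ⟨rfl, hw⟩⟩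
  have hsurj : #(U.erase u₀) ≤ #{f ∈ A | tl f ∈ U ∨ hd f ∈ U} := by
    refine card_le_card_of_surjOn (fun f => if d (tl f) < d (hd f) then hd f else tl f)
      fun u hu => ?_
    have huU := mem_of_mem_erase hu
    obtain ⟨f, hf, ⟨rfl, h⟩ | ⟨rfl, h⟩⟩ := hlast u hu
    · exact ⟨f, by simp [hf, huU], by simp only; rw [if_neg (by omega)]⟩
    · exact ⟨f, by simp [hf, huU], by simp only; rw [if_pos (by omega)]⟩
  have := pred_card_le_card_erase (s := U) (a := u₀)
  omega

variable [DecidableEq E]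

lemma reachable_or_of_reachable_insert {A : Finset E} {e : E} {u v : V}
    (h : (edgeGraph tl hd (insert e A)).Reachable u v) :
    (edgeGraph tl hd A).Reachable u v ∨
      ((edgeGraph tl hd A).Reachable u (tl e) ∧ (edgeGraph tl hd A).Reachable (hd e) v) ∨
      ((edgeGraph tl hd A).Reachable u (hd e) ∧ (edgeGraph tl hd A).Reachable (tl e) v) := by
  rw [SimpleGraph.reachable_iff_reflTransGen] at h
  induction h with
  | refl => exact Or.inl .rfl
  | tail _ hadj ih =>
    obtain ⟨-, ⟨f, hf, rfl, rfl⟩ | ⟨f, hf, rfl, rfl⟩⟩ := hadj <;>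
    rcases mem_insert.mp hf with rfl | hf
    · grind [SimpleGraph.Reachable.rfl]
    · have := reachable_of_mem (tl := tl) (hd := hd) hf
      grind [SimpleGraph.Reachable.trans]
    · grind [SimpleGraph.Reachable.rfl]
    · have := (reachable_of_mem (tl := tl) (hd := hd) hf).symm
      grind [SimpleGraph.Reachable.trans]

lemma not_spans_insert {A B : Finset E} {e g : E} (hB : ¬ Spans tl hd B e) (hBA : B ⊆ A)
    (hA : Spans tl hd A e) (hg : ¬ Spans tl hd A g) : ¬ Spans tl hd (insert g B) e := by
  intro h
  have hmono := edgeGraph_mono (tl := tl) (hd := hd) hBA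
  rcases reachable_or_of_reachable_insert h with h | ⟨h₁, h₂⟩ | ⟨h₁, h₂⟩
  · exact hB h
  · exact hg (((h₁.mono hmono).symm.trans hA).trans (h₂.mono hmono).symm)
  · exact hg (((h₂.mono hmono).trans hA.symm).trans (h₁.mono hmono))

lemma IsForest.anti {A B : Finset E} (hBA : B ⊆ A) (hA : IsForest tl hd A) :
    IsForest tl hd B :=
  fun e he hs => hA e (hBA he) (hs.mono (erase_subset_erase _ hBA))

lemma isForest_empty : IsForest tl hd (∅ : Finset E) := by
  simp [IsForest]

lemma IsForest.insert {A : Finset E} {e : E} (hA : IsForest tl hd A)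
    (he : ¬ Spans tl hd A e) : IsForest tl hd (insert e A) := by
  have heA : e ∉ A := fun h => he (spans_of_mem h)
  intro f hf
  rcases mem_insert.mp hf with rfl | hfA
  · rwa [erase_insert heA]
  · rw [erase_insert_of_ne (ne_of_mem_of_not_mem hfA heA).symm]
    exact not_spans_insert (hA f hfA) (erase_subset _ _) (spans_of_mem hfA) he

/-- In a forest, edges that can each be deleted without separating the ends of `g` can all be
deleted at once: otherwise one of them would close a cycle. -/
lemma IsForest.spans_sdiff {A : Finset E} (hA : IsForest tl hd A) {g : E}
    (hg : Spans tl hd A g) {X : Finset E} (hX : ∀ x ∈ X, Spans tl hd (A.erase x) g) :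
    Spans tl hd (A \ X) g := by
  induction X using Finset.induction_on with
  | empty => simpa
  | insert x X _ ih =>
    have ih := ih fun y hy => hX y (mem_insert_of_mem hy)
    rw [sdiff_insert]
    by_cases hx : x ∈ A \ X
    · have hxA : x ∈ A := (mem_sdiff.mp hx).1
      have hmono := edgeGraph_mono (tl := tl) (hd := hd)
        (erase_subset_erase x (sdiff_subset (s := A) (t := X)))
      rw [← insert_erase hx] at ih
      rcases reachable_or_of_reachable_insert ih with h | ⟨h₁, h₂⟩ | ⟨h₁, h₂⟩
      · exact h
      · exact absurd (((h₁.mono hmono).symm.trans (hX x (mem_insert_self _ _))).trans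
          (h₂.mono hmono).symm) (hA x hxA)
      · exact absurd (((h₂.mono hmono).trans (hX x (mem_insert_self _ _)).symm).trans
          (h₁.mono hmono)) (hA x hxA)
    · rwa [erase_eq_of_notMem hx]

lemma IsForest.card_add_one_le {A : Finset E} (hA : IsForest tl hd A) {W : Finset V}
    (hAW : ∀ f ∈ A, tl f ∈ W ∧ hd f ∈ W) (hW : W.Nonempty) : #A + 1 ≤ #W := by
  induction A using Finset.strongInduction generalizing W with
  | H A ih =>
  obtain rfl | ⟨e, he⟩ := A.eq_empty_or_nonempty
  · simpa using hW.card_pos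
  classical
  set A' := A.erase e
  -- split `W` by the two sides of the bridge `e`
  set p : V → Prop := (edgeGraph tl hd A').Reachable (tl e)
  have hp : ∀ f ∈ A', p (tl f) ↔ p (hd f) := fun f hf => reachable_tl_iff_reachable_hd hf _
  have hA'W : ∀ f ∈ A', tl f ∈ W ∧ hd f ∈ W := fun f hf => hAW f (erase_subset _ _ hf)
  have h₁ := ih (A'.filter fun f => p (tl f))
    ((filter_subset _ _).trans_ssubset (erase_ssubset he))
    (hA.anti ((filter_subset _ _).trans (erase_subset _ _)))
    (endpoints_mem_filter hp hA'W) ⟨tl e, mem_filter.mpr ⟨(hAW e he).1, .rfl⟩⟩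
  have h₂ := ih (A'.filter fun f => ¬ p (tl f))
    ((filter_subset _ _).trans_ssubset (erase_ssubset he))
    (hA.anti ((filter_subset _ _).trans (erase_subset _ _)))
    (endpoints_mem_filter (p := fun v => ¬ p v) (fun f hf => not_congr (hp f hf)) hA'W)
    ⟨hd e, mem_filter.mpr ⟨(hAW e he).2, (hA e he : ¬ p (hd e))⟩⟩
  have := card_filter_add_card_filter_not (s := A') (fun f => p (tl f))
  have := card_filter_add_card_filter_not (s := W) p
  have : #A' + 1 = #A := card_erase_add_one he
  omega

lemma IsForest.reachable_of_card_add_one [Fintype V] {A : Finset E} (hA : IsForest tl hd A)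
    (hcard : #A + 1 = Fintype.card V) (u v : V) : (edgeGraph tl hd A).Reachable u v := by
  by_contra huv
  classical
  set p : V → Prop := (edgeGraph tl hd A).Reachable u
  have hp : ∀ f ∈ A, p (tl f) ↔ p (hd f) := fun f hf => reachable_tl_iff_reachable_hd hf _
  have hAW : ∀ f ∈ A, tl f ∈ univ ∧ hd f ∈ univ := fun _ _ => ⟨mem_univ _, mem_univ _⟩
  have h₁ := (hA.anti (filter_subset (fun f => p (tl f)) A)).card_add_one_le
    (endpoints_mem_filter hp hAW) ⟨u, mem_filter.mpr ⟨mem_univ _, .rfl⟩⟩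
  have h₂ := (hA.anti (filter_subset (fun f => ¬ p (tl f)) A)).card_add_one_le
    (endpoints_mem_filter (p := fun v => ¬ p v) (fun f hf => not_congr (hp f hf)) hAW)
    ⟨v, mem_filter.mpr ⟨mem_univ _, (huv : ¬ p v)⟩⟩
  have := card_filter_add_card_filter_not (s := A) (fun f => p (tl f))
  have := card_filter_add_card_filter_not (s := (univ : Finset V)) p
  rw [card_univ] at this
  omega

lemma isForest_of_reachable [Fintype V] {A : Finset E}
    (hA : ∀ u v, (edgeGraph tl hd A).Reachable u v) (hcard : #A + 1 = Fintype.card V) :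
    IsForest tl hd A := by
  classical
  intro e he hs
  have hreach : ∀ u v, (edgeGraph tl hd (A.erase e)).Reachable u v := fun u v =>
    reachable_of_forall_spans (fun f hf => by
      by_cases hfe : f = e
      · exact hfe ▸ hs
      · exact spans_of_mem (mem_erase.mpr ⟨hfe, hf⟩)) (hA u v)
  have := card_le_card_filter_add_one_of_reachable (U := univ) fun u _ => hreach (tl e) u
  have := card_filter_le (A.erase e) fun f => tl f ∈ univ ∨ hd f ∈ univ
  have := card_erase_add_one he
  rw [card_univ] at *
  omega

variable {ι : Type*}

variable (tl hd) in
/-- `f` lies on the cycle that `e` closes in some `F i`, so `e` may replace `f` there. -/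
def Exchange (F : ι → Finset E) (e f : E) : Prop :=
  ∃ i, f ∈ F i ∧ Spans tl hd (F i) e ∧ ¬ Spans tl hd ((F i).erase f) e

variable (tl hd) in
def ExchangeReachable (F : ι → Finset E) (e₀ : E) : ℕ → E → Prop
  | 0, g => g = e₀
  | t + 1, g =>
    ExchangeReachable F e₀ t g ∨ ∃ e, ExchangeReachable F e₀ t e ∧ Exchange tl hd F e g

lemma ExchangeReachable.mono {F : ι → Finset E} {e₀ g : E} {t s : ℕ} (hts : t ≤ s)
    (h : ExchangeReachable tl hd F e₀ t g) : ExchangeReachable tl hd F e₀ s g := by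
  induction s, hts using Nat.le_induction with
  | base => exact h
  | succ s _ ih => exact Or.inl ih

def transferEdge [DecidableEq ι] (F : ι → Finset E) (g : E) (j i : ι) : ι → Finset E :=
  update (update F j ((F j).erase g)) i (insert g (F i))

/-- As `g` is not reachable within `m` exchanges, no edge reachable within fewer exchanges has `g`
on its cycle, so these exchanges survive the transfer of `g`. -/
lemma ExchangeReachable.transfer [DecidableEq ι] {F : ι → Finset E} {e₀ g h : E} {i j : ι}
    {m t : ℕ} (hgj : g ∈ F j) (hgi : ¬ Spans tl hd (F i) g)
    (hg : ¬ ExchangeReachable tl hd F e₀ m g) (htm : t ≤ m)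
    (hh : ExchangeReachable tl hd F e₀ t h) :
    ExchangeReachable tl hd (transferEdge F g j i) e₀ t h := by
  induction t generalizing h with
  | zero => exact hh
  | succ t ih =>
    rcases hh with hh | ⟨e, he, l, hhl, hel, hehl⟩
    · exact Or.inl (ih (by omega) hh)
    refine Or.inr ⟨e, ih (by omega) he, l, ?_⟩
    have hhg : h ≠ g := by
      rintro rfl
      exact hg (ExchangeReachable.mono htm (Or.inr ⟨e, he, l, hhl, hel, hehl⟩))
    rw [transferEdge]
    by_cases hli : l = i
    · subst hli
      rw [update_self, erase_insert_of_ne hhg.symm]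
      exact ⟨mem_insert_of_mem hhl, hel.mono (subset_insert _ _),
        not_spans_insert hehl (erase_subset _ _) hel hgi⟩
    by_cases hlj : l = j
    · subst hlj
      rw [update_of_ne hli, update_self]
      refine ⟨mem_erase.mpr ⟨hhg, hhl⟩, ?_, fun hs => hehl (hs.mono ?_)⟩
      · by_contra hs
        exact hg (ExchangeReachable.mono htm (Or.inr ⟨e, he, l, hgj, hel, hs⟩))
      · exact erase_subset_erase h (erase_subset g (F l))
    · rw [update_of_ne hli, update_of_ne hlj]
      exact ⟨hhl, hel, hehl⟩

variable [Fintype ι]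

lemma card_filter_biUnion {F : ι → Finset E} (hF : Pairwise (Disjoint on F)) (p : E → Prop)
    [DecidablePred p] : #((univ.biUnion F).filter p) = ∑ i, #((F i).filter p) := by
  rw [filter_biUnion, card_biUnion]
  exact fun i _ j _ hij => disjoint_filter_filter (hF hij)

variable (tl hd) in
def IsForestPartition (F : ι → Finset E) (S : Finset E) : Prop :=
  (∀ i, IsForest tl hd (F i)) ∧ Pairwise (Disjoint on F) ∧ univ.biUnion F = S

lemma not_sparseOn_insert_of_card_le [DecidableEq V] {F : ι → Finset E} {S : Finset E}
    (hdisj : Pairwise (Disjoint on F)) (hunion : univ.biUnion F = S) {e₀ : E} (he₀ : e₀ ∉ S)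
    {U : Finset V} (he₀U : tl e₀ ∈ U ∧ hd e₀ ∈ U)
    (hU : ∀ i, #U ≤ #{f ∈ F i | tl f ∈ U ∧ hd f ∈ U} + 1) :
    ¬ SparseOn tl hd (Fintype.card ι) (Fintype.card ι) (insert e₀ S) := by
  intro hsp
  have hle := hsp U ⟨tl e₀, he₀U.1⟩
  have hcount : #{f ∈ insert e₀ S | tl f ∈ U ∧ hd f ∈ U} =
      ∑ i, #{f ∈ F i | tl f ∈ U ∧ hd f ∈ U} + 1 := by
    rw [filter_insert, if_pos he₀U, card_insert_of_notMem fun h => he₀ (mem_filter.mp h).1,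
      ← hunion, card_filter_biUnion hdisj]
  have hsum :
      ∑ _i : ι, ((#U : ℤ) - 1) ≤ ∑ i, (#{f ∈ F i | tl f ∈ U ∧ hd f ∈ U} : ℤ) :=
    sum_le_sum fun i _ => by have := hU i; omega
  rw [sum_const, card_univ, nsmul_eq_mul] at hsum
  rw [hcount] at hle
  push_cast at hle
  linarith

/-- The edges `D` reachable from `e₀` are spanned by every `F i` inside `D` itself, so each `F i`
connects the vertices that `D` connects to `tl e₀`. -/
lemma IsForestPartition.not_sparseOn_insert [Fintype V] [DecidableEq V] {F : ι → Finset E}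
    {S : Finset E} {e₀ : E} (hF : IsForestPartition tl hd F S) (he₀ : e₀ ∉ S)
    (hspan : ∀ t g, ExchangeReachable tl hd F e₀ t g → ∀ i, Spans tl hd (F i) g) :
    ¬ SparseOn tl hd (Fintype.card ι) (Fintype.card ι) (insert e₀ S) := by
  classical
  obtain ⟨hforest, hdisj, hunion⟩ := hF
  set D := (insert e₀ S).filter fun g => ∃ t, ExchangeReachable tl hd F e₀ t g
  have he₀D : e₀ ∈ D := mem_filter.mpr ⟨mem_insert_self _ _, 0, rfl⟩
  have hspanD : ∀ i, ∀ g ∈ D, Spans tl hd (F i ∩ D) g := by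
    intro i g hg
    obtain ⟨t, hgt⟩ := (mem_filter.mp hg).2
    rw [← sdiff_sdiff_self_left]
    refine (hforest i).spans_sdiff (hspan t g hgt i) fun x hx => ?_
    obtain ⟨hxi, hxD⟩ := mem_sdiff.mp hx
    by_contra hs
    have hxS : x ∈ insert e₀ S :=
      mem_insert_of_mem (hunion ▸ mem_biUnion.mpr ⟨i, mem_univ _, hxi⟩)
    exact hxD (mem_filter.mpr ⟨hxS, t + 1, Or.inr ⟨g, hgt, i, hxi, hspan t g hgt i, hs⟩⟩)
  set U : Finset V := univ.filter ((edgeGraph tl hd D).Reachable (tl e₀))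
  refine not_sparseOn_insert_of_card_le hdisj hunion he₀
    (by simpa [U] using reachable_of_mem he₀D)
    fun i => (card_le_card_filter_add_one_of_reachable (A := F i ∩ D) (U := U) (u₀ := tl e₀)
      fun u hu => reachable_of_forall_spans (hspanD i) (mem_filter.mp hu).2).trans ?_
  refine Nat.add_le_add_right (card_le_card fun f hf => ?_) 1
  simp only [mem_filter, mem_inter, U, mem_univ, true_and] at hf ⊢
  have := reachable_tl_iff_reachable_hd (tl := tl) (hd := hd) hf.1.2 (tl e₀)
  tauto

variable [DecidableEq ι]

lemma IsForestPartition.update_erase {F : ι → Finset E} {S : Finset E}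
    (hF : IsForestPartition tl hd F S) {g : E} {j : ι} (hg : g ∈ F j) :
    IsForestPartition tl hd (update F j ((F j).erase g)) (S.erase g) := by
  obtain ⟨hforest, hdisj, hunion⟩ := hF
  refine ⟨fun i => ?_, ?_, ?_⟩
  · rcases eq_or_ne i j with rfl | hij
    · simpa using (hforest i).anti (erase_subset g (F i))
    · simpa [hij] using hforest i
  · refine pairwise_disjoint_update hdisj fun i hij => ?_
    exact disjoint_of_subset_left (erase_subset _ _) (hdisj hij.symm)
  · have hgi : ∀ i ≠ j, g ∉ F i := fun i hij hgi => disjoint_left.mp (hdisj hij) hgi hg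
    ext x
    simp only [← hunion, mem_biUnion, mem_univ, true_and, mem_erase, update_apply]
    grind

lemma IsForestPartition.update_insert {F : ι → Finset E} {S : Finset E}
    (hF : IsForestPartition tl hd F S) {g : E} (hgS : g ∉ S) {i : ι}
    (hgi : ¬ Spans tl hd (F i) g) :
    IsForestPartition tl hd (update F i (insert g (F i))) (insert g S) := by
  obtain ⟨hforest, hdisj, hunion⟩ := hF
  refine ⟨fun j => ?_, ?_, ?_⟩
  · rcases eq_or_ne j i with rfl | hji
    · simpa using (hforest j).insert hgi
    · simpa [hji] using hforest j
  · refine pairwise_disjoint_update hdisj fun j hji =>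
      disjoint_insert_left.mpr ⟨?_, hdisj hji.symm⟩
    exact fun hgj => hgS (hunion ▸ mem_biUnion.mpr ⟨j, mem_univ _, hgj⟩)
  · ext x
    simp only [← hunion, mem_biUnion, mem_univ, true_and, mem_insert, update_apply]
    grind

lemma IsForestPartition.transfer {F : ι → Finset E} {S : Finset E}
    (hF : IsForestPartition tl hd F S) {g : E} {i j : ι} (hgj : g ∈ F j)
    (hgi : ¬ Spans tl hd (F i) g) :
    IsForestPartition tl hd (transferEdge F g j i) S := by
  have hij : i ≠ j := fun h => hgi (h ▸ spans_of_mem hgj)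
  have hgS : g ∈ S := hF.2.2 ▸ mem_biUnion.mpr ⟨j, mem_univ _, hgj⟩
  have h := (hF.update_erase hgj).update_insert (notMem_erase g S)
    (i := i) (by rwa [update_of_ne hij])
  rwa [update_of_ne hij, insert_erase hgS] at h

lemma IsForestPartition.exists_insert_of_exchangeReachable {F : ι → Finset E} {S : Finset E}
    (hF : IsForestPartition tl hd F S) {e₀ g : E} (he₀ : e₀ ∉ S) {m : ℕ}
    (hg : ExchangeReachable tl hd F e₀ m g) {i : ι} (hgi : ¬ Spans tl hd (F i) g) :
    ∃ G : ι → Finset E, IsForestPartition tl hd G (insert e₀ S) := by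
  induction m generalizing F g i with
  | zero =>
    subst hg
    exact ⟨_, hF.update_insert he₀ hgi⟩
  | succ m ih =>
    by_cases hgm : ExchangeReachable tl hd F e₀ m g
    · exact ih hF hgm hgi
    obtain ⟨e, he, j, hgj, hej, hegj⟩ := hg.resolve_left hgm
    have hij : i ≠ j := fun h => hgi (h ▸ spans_of_mem hgj)
    exact ih (hF.transfer hgj hgi) (he.transfer hgj hgi hgm le_rfl)
      (by rwa [transferEdge, update_of_ne hij.symm, update_self])

theorem exists_isForestPartition_of_sparseOn [Fintype V] [DecidableEq V] {S : Finset E}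
    (hS : SparseOn tl hd (Fintype.card ι) (Fintype.card ι) S) :
    ∃ F : ι → Finset E, IsForestPartition tl hd F S := by
  induction S using Finset.induction_on with
  | empty =>
    exact ⟨fun _ => ∅, fun _ => isForest_empty, fun _ _ _ => disjoint_empty_left _,
      by ext; simp⟩
  | insert e₀ S he₀ ih =>
    obtain ⟨F, hF⟩ := ih (hS.mono (subset_insert _ _))
    by_cases h : ∃ t g i, ExchangeReachable tl hd F e₀ t g ∧ ¬ Spans tl hd (F i) g
    · obtain ⟨t, g, i, hg, hgi⟩ := h
      exact hF.exists_insert_of_exchangeReachable he₀ hg hgi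
    · push Not at h
      exact absurd hS (hF.not_sparseOn_insert he₀ fun t g hg i => h t g i hg)

end Multigraph

section SpanningTrees

open Multigraph

variable {n : ℕ} {E : Type} [DecidableEq E] {tail head : E → Fin n}

lemma IsSpanningTree.isForest {T : Finset E} (hT : IsSpanningTree tail head T) :
    IsForest tail head T := by
  obtain ⟨hcard, hconn⟩ := hT
  have : 0 < n := Fin.pos_iff_nonempty.mpr hconn.nonempty
  exact isForest_of_reachable hconn.preconnected (by rw [Fintype.card_fin]; omega)

lemma isSpanningTree_of_isForest (hn : 0 < n) {T : Finset E} (hT : IsForest tail head T)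
    (hcard : #T = n - 1) : IsSpanningTree tail head T :=
  ⟨hcard, (SimpleGraph.connected_iff _).mpr
    ⟨hT.reachable_of_card_add_one (by rw [Fintype.card_fin]; omega), ⟨⟨0, hn⟩⟩⟩⟩

lemma IsTreePartition.sparseOn {k : ℕ} {S : Finset E} (hS : IsTreePartition tail head k S) :
    SparseOn tail head k k S := by
  obtain ⟨T, hT, hdisj, rfl⟩ := hS
  intro W hW
  have hle : ∀ i, (#{e ∈ T i | tail e ∈ W ∧ head e ∈ W} : ℤ) ≤ #W - 1 := fun i => by
    have := ((hT i).isForest.anti (filter_subset _ (T i))).card_add_one_le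
      (fun f hf => (mem_filter.mp hf).2) hW
    omega
  rw [card_filter_biUnion fun i j hij => hdisj i j hij]
  push_cast
  have := sum_le_sum fun i (_ : i ∈ univ) => hle i
  rw [sum_const, card_univ, Fintype.card_fin, nsmul_eq_mul] at this
  linarith

lemma isTreePartition_of_sparseOn (hn : 0 < n) {k : ℕ} {S : Finset E}
    (hS : SparseOn tail head k k S) (hcard : #S = k * (n - 1)) :
    IsTreePartition tail head k S := by
  obtain ⟨F, hforest, hdisj, rfl⟩ :=
    exists_isForestPartition_of_sparseOn (ι := Fin k) (by simpa using hS)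
  have hle : ∀ i ∈ univ, #(F i) ≤ n - 1 := fun i _ => by
    have := (hforest i).card_add_one_le (W := univ) (fun _ _ => ⟨mem_univ _, mem_univ _⟩)
      ⟨⟨0, hn⟩, mem_univ _⟩
    rw [card_univ, Fintype.card_fin] at this
    omega
  have hsum : ∑ i, #(F i) = ∑ _i : Fin k, (n - 1) := by
    rw [← card_biUnion (hdisj.set_pairwise _), hcard, sum_const, card_univ, Fintype.card_fin,
      smul_eq_mul]
  have heq := (sum_eq_sum_iff_of_le hle).mp hsum
  exact ⟨F, fun i => isSpanningTree_of_isForest hn (hforest i) (heq i (mem_univ _)),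
    fun i j hij => hdisj hij, rfl⟩

end SpanningTrees

lemma card_filter_union_add_card_filter_sdiff {E : Type} [Fintype E] [DecidableEq E]
    (red : E → Bool) {B' : Finset E} (hB' : B' ⊆ univ.filter fun e => red e = false) :
    #((univ.filter fun e => red e = true) ∪ B') + #((univ.filter fun e => red e = false) \ B') =
      Fintype.card E := by
  rw [← card_union_of_disjoint, union_assoc, union_sdiff_of_subset hB', ← card_univ]
  · congr 1
    ext e
    cases red e <;> simp
  · exact disjoint_union_left.mpr ⟨disjoint_of_subset_right sdiff_subset
      (disjoint_filter.mpr fun e _ h => by simp [h]), disjoint_sdiff⟩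

theorem stmt1_general {n : ℕ} {E : Type} [Fintype E] [DecidableEq E] (hn : 0 < n)
    (tail head : E → Fin n)
    (red : E → Bool) (a b : ℕ)
    (hE : Fintype.card E = (a + b) * n - (a + b)) :
    (ABSparseOn tail head red a b (Finset.univ : Finset E) ∧
        Fintype.card E = (a + b) * n - (a + b)) ↔
      ∃ B' ⊆ Finset.univ.filter fun e => red e = false,
        IsTreePartition tail head a ((Finset.univ.filter fun e => red e = true) ∪ B') ∧
        IsTreePartition tail head b ((Finset.univ.filter fun e => red e = false) \ B') := by
  constructor
  · rintro ⟨⟨B', hB', hR, hB⟩, -⟩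
    have hsplit := card_filter_union_add_card_filter_sdiff red hB'
    have : Nonempty (Fin n) := ⟨⟨0, hn⟩⟩
    have h₁ := hR.card_le
    have h₂ := hB.card_le
    rw [Fintype.card_fin] at h₁ h₂
    obtain ⟨m, rfl⟩ : ∃ m, n = m + 1 := ⟨n - 1, by omega⟩
    rw [hE, mul_add_one, Nat.add_sub_cancel] at hsplit
    refine ⟨B', hB', isTreePartition_of_sparseOn hn hR ?_,
      isTreePartition_of_sparseOn hn hB ?_⟩ <;>
    · zify at hsplit ⊢
      push_cast at h₁ h₂ ⊢
      linarith
  · rintro ⟨B', hB', hR, hB⟩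
    exact ⟨⟨B', hB', hR.sparseOn, hB.sparseOn⟩, hE⟩

/-- `G` is `[a,b]`-tight iff there is `B' ⊆ B` with `R ∪ B'` the
disjoint union of `a` spanning trees and `B \ B'` the disjoint union of `b`
spanning trees. -/
theorem stmt1 {n : ℕ} {E : Type} [Fintype E] [DecidableEq E] (hn : 0 < n)
    (tail head : E → Fin n) (hlt : ∀ e, tail e < head e)
    (red : E → Bool) (a b : ℕ) (ha : 0 < a) (hb : 0 < b)
    (hE : Fintype.card E = (a + b) * n - (a + b)) :
    (ABSparseOn tail head red a b (Finset.univ : Finset E) ∧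
        Fintype.card E = (a + b) * n - (a + b)) ↔
      ∃ B' ⊆ Finset.univ.filter fun e => red e = false,
        IsTreePartition tail head a ((Finset.univ.filter fun e => red e = true) ∪ B') ∧
        IsTreePartition tail head b ((Finset.univ.filter fun e => red e = false) \ B') :=
  stmt1_general hn tail head red a b hE
end

section
/- Let G be a bicolored multigraph on n vertices with edge set E and let a, b be positive integers. Then there exists a matroid on ground set E whose independent sets are exactly the subsets F ⊆ E such that the sub-multigraph of G with edge set F (with inherited endpoints and colors) is [a,b]-sparse. -/
open MvPolynomial

section SparseAux

variable {V E : Type} [Fintype V] [DecidableEq V] [DecidableEq E]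
variable {tail head : E → V}

private lemma sparse_mono {k ℓ : ℤ} {F F' : Finset E} (hsub : F' ⊆ F)
    (h : SparseOn tail head k ℓ F) : SparseOn tail head k ℓ F' := by
  intro W hW
  refine le_trans ?_ (h W hW)
  exact_mod_cast Finset.card_le_card (Finset.filter_subset_filter _ hsub)

private lemma sparse_kk_empty {k : ℤ} (hk : 1 ≤ k) :
    SparseOn tail head k k (∅ : Finset E) := by
  intro W hW
  simp only [Finset.filter_empty, Finset.card_empty]
  have h1 : (1 : ℤ) ≤ (W.card : ℤ) := by exact_mod_cast hW.card_pos
  push_cast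
  nlinarith

private lemma cnt_submod (F : Finset E) (W₁ W₂ : Finset V) :
    (F.filter fun e => tail e ∈ W₁ ∧ head e ∈ W₁).card
      + (F.filter fun e => tail e ∈ W₂ ∧ head e ∈ W₂).card
    ≤ (F.filter fun e => tail e ∈ W₁ ∪ W₂ ∧ head e ∈ W₁ ∪ W₂).card
      + (F.filter fun e => tail e ∈ W₁ ∩ W₂ ∧ head e ∈ W₁ ∩ W₂).card := by
  classical
  set A := F.filter fun e => tail e ∈ W₁ ∧ head e ∈ W₁ with hA
  set B := F.filter fun e => tail e ∈ W₂ ∧ head e ∈ W₂ with hB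
  have hU : A ∪ B ⊆ F.filter fun e => tail e ∈ W₁ ∪ W₂ ∧ head e ∈ W₁ ∪ W₂ := by
    intro e he
    simp only [hA, hB, Finset.mem_union, Finset.mem_filter] at he ⊢
    rcases he with ⟨he, h1, h2⟩ | ⟨he, h1, h2⟩ <;> simp [he, h1, h2]
  have hI : A ∩ B = F.filter fun e => tail e ∈ W₁ ∩ W₂ ∧ head e ∈ W₁ ∩ W₂ := by
    ext e
    simp only [hA, hB, Finset.mem_inter, Finset.mem_filter]
    tauto
  calc A.card + B.card = (A ∪ B).card + (A ∩ B).card :=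
        (Finset.card_union_add_card_inter A B).symm
    _ ≤ _ := by
        rw [hI]; exact Nat.add_le_add_right (Finset.card_le_card hU) _

/-- `W` is a tight set for the edge set `I`. -/
private def Tight (tail head : E → V) (k : ℤ) (I : Finset E) (W : Finset V) : Prop :=
  W.Nonempty ∧
    ((I.filter fun e => tail e ∈ W ∧ head e ∈ W).card : ℤ) = k * (W.card : ℤ) - k

private lemma tight_union {k : ℤ} {I : Finset E} (hI : SparseOn tail head k k I)
    {W₁ W₂ : Finset V} (h₁ : Tight tail head k I W₁) (h₂ : Tight tail head k I W₂)
    (hne : (W₁ ∩ W₂).Nonempty) : Tight tail head k I (W₁ ∪ W₂) := by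
  obtain ⟨hW₁, e₁⟩ := h₁
  obtain ⟨hW₂, e₂⟩ := h₂
  have hcard : (W₁ ∪ W₂).card + (W₁ ∩ W₂).card = W₁.card + W₂.card :=
    Finset.card_union_add_card_inter _ _
  have hcard' : ((W₁ ∪ W₂).card : ℤ) + ((W₁ ∩ W₂).card : ℤ)
      = (W₁.card : ℤ) + (W₂.card : ℤ) := by exact_mod_cast hcard
  have hsub := cnt_submod (tail := tail) (head := head) I W₁ W₂
  have hsub' : ((I.filter fun e => tail e ∈ W₁ ∧ head e ∈ W₁).card : ℤ)
      + ((I.filter fun e => tail e ∈ W₂ ∧ head e ∈ W₂).card : ℤ)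
    ≤ ((I.filter fun e => tail e ∈ W₁ ∪ W₂ ∧ head e ∈ W₁ ∪ W₂).card : ℤ)
      + ((I.filter fun e => tail e ∈ W₁ ∩ W₂ ∧ head e ∈ W₁ ∩ W₂).card : ℤ) := by
    exact_mod_cast hsub
  have hu := hI (W₁ ∪ W₂) (hW₁.mono Finset.subset_union_left)
  have hi := hI (W₁ ∩ W₂) hne
  have hk2 : k * ((W₁ ∪ W₂).card : ℤ) + k * ((W₁ ∩ W₂).card : ℤ)
      = k * (W₁.card : ℤ) + k * (W₂.card : ℤ) := by linear_combination k * hcard'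
  exact ⟨hW₁.mono Finset.subset_union_left, by linarith⟩

private lemma exists_maximal_tight {k : ℤ} {I : Finset E} {W : Finset V}
    (hW : Tight tail head k I W) :
    ∃ Wm, W ⊆ Wm ∧ Tight tail head k I Wm ∧
      ∀ W', Tight tail head k I W' → Wm ⊆ W' → W' = Wm := by
  classical
  have hne : ((Finset.univ : Finset (Finset V)).filter
      fun W' => Tight tail head k I W' ∧ W ⊆ W').Nonempty :=
    ⟨W, by simp [hW]⟩
  obtain ⟨Wm, hWm, hmax⟩ := Finset.exists_max_image _ (fun W' => W'.card) hne
  simp only [Finset.mem_filter, Finset.mem_univ, true_and] at hWm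
  refine ⟨Wm, hWm.2, hWm.1, fun W' hW' hsub => ?_⟩
  have hle : W'.card ≤ Wm.card := hmax W' (by
    simp only [Finset.mem_filter, Finset.mem_univ, true_and]
    exact ⟨hW', hWm.2.trans hsub⟩)
  exact (Finset.eq_of_subset_of_card_le hsub hle).symm

private lemma count_aug {k : ℤ} (hk : 1 ≤ k) {I J : Finset E}
    (hI : SparseOn tail head k k I) (hJ : SparseOn tail head k k J)
    (hcard : I.card < J.card) :
    ∃ e ∈ J, e ∉ I ∧ SparseOn tail head k k (insert e I) := by
  classical
  by_contra hcon
  push_neg at hcon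
  -- every edge of `J \ I` lies inside a tight set of `I`
  have key : ∀ e ∈ J, e ∉ I →
      ∃ W, Tight tail head k I W ∧ tail e ∈ W ∧ head e ∈ W := by
    intro e heJ heI
    have hns := hcon e heJ heI
    rw [SparseOn] at hns
    push_neg at hns
    obtain ⟨W, hWne, hWgt⟩ := hns
    have hIW := hI W hWne
    by_cases hin : tail e ∈ W ∧ head e ∈ W
    · have heq : (insert e I).filter (fun e' => tail e' ∈ W ∧ head e' ∈ W)
          = insert e (I.filter fun e' => tail e' ∈ W ∧ head e' ∈ W) := by
        rw [Finset.filter_insert, if_pos hin]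
      have hc : ((insert e I).filter (fun e' => tail e' ∈ W ∧ head e' ∈ W)).card
          ≤ (I.filter fun e' => tail e' ∈ W ∧ head e' ∈ W).card + 1 := by
        rw [heq]; exact Finset.card_insert_le _ _
      have hc' : (((insert e I).filter (fun e' => tail e' ∈ W ∧ head e' ∈ W)).card : ℤ)
          ≤ ((I.filter fun e' => tail e' ∈ W ∧ head e' ∈ W).card : ℤ) + 1 := by
        exact_mod_cast hc
      exact ⟨W, ⟨hWne, by linarith⟩, hin.1, hin.2⟩
    · exfalso
      have heq : (insert e I).filter (fun e' => tail e' ∈ W ∧ head e' ∈ W)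
          = I.filter fun e' => tail e' ∈ W ∧ head e' ∈ W := by
        rw [Finset.filter_insert, if_neg hin]
      rw [heq] at hWgt
      linarith
  -- the finset of maximal tight sets
  set T : Finset (Finset V) := (Finset.univ : Finset (Finset V)).filter
      (fun W => Tight tail head k I W ∧
        ∀ W', Tight tail head k I W' → W ⊆ W' → W' = W) with hT
  have hTmem : ∀ W ∈ T, Tight tail head k I W ∧
      ∀ W', Tight tail head k I W' → W ⊆ W' → W' = W := by
    intro W hW
    simpa only [hT, Finset.mem_filter, Finset.mem_univ, true_and] using hW
  have hTdisj : ∀ W₁ ∈ T, ∀ W₂ ∈ T, W₁ ≠ W₂ → Disjoint W₁ W₂ := by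
    intro W₁ h₁ W₂ h₂ hne
    obtain ⟨ht₁, hm₁⟩ := hTmem W₁ h₁
    obtain ⟨ht₂, hm₂⟩ := hTmem W₂ h₂
    by_contra hnd
    have hint := Finset.not_disjoint_iff_nonempty_inter.1 hnd
    have hu := tight_union hI ht₁ ht₂ hint
    have e₁ := hm₁ _ hu Finset.subset_union_left
    have e₂ := hm₂ _ hu Finset.subset_union_right
    exact hne (e₁.symm.trans e₂)
  -- filters over distinct maximal tight sets are disjoint
  have hfdisj : ∀ (F : Finset E), ∀ W₁ ∈ T, ∀ W₂ ∈ T, W₁ ≠ W₂ →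
      Disjoint (F.filter fun e => tail e ∈ W₁ ∧ head e ∈ W₁)
        (F.filter fun e => tail e ∈ W₂ ∧ head e ∈ W₂) := by
    intro F W₁ h₁ W₂ h₂ hne
    rw [Finset.disjoint_left]
    intro e he₁ he₂
    rw [Finset.mem_filter] at he₁ he₂
    exact (Finset.disjoint_left.1 (hTdisj W₁ h₁ W₂ h₂ hne)) he₁.2.1 he₂.2.1
  set FBJ := T.biUnion (fun W => J.filter fun e => tail e ∈ W ∧ head e ∈ W) with hFBJ
  set FBI := T.biUnion (fun W => I.filter fun e => tail e ∈ W ∧ head e ∈ W) with hFBI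
  have hFBJsub : FBJ ⊆ J := Finset.biUnion_subset.2 fun W _ => Finset.filter_subset _ _
  have hFBIsub : FBI ⊆ I := Finset.biUnion_subset.2 fun W _ => Finset.filter_subset _ _
  have hJcount : (FBJ).card = ∑ W ∈ T, (J.filter fun e => tail e ∈ W ∧ head e ∈ W).card :=
    Finset.card_biUnion (hfdisj J)
  have hIcount : (FBI).card = ∑ W ∈ T, (I.filter fun e => tail e ∈ W ∧ head e ∈ W).card :=
    Finset.card_biUnion (hfdisj I)
  have hWle : ∀ W ∈ T, (J.filter fun e => tail e ∈ W ∧ head e ∈ W).card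
      ≤ (I.filter fun e => tail e ∈ W ∧ head e ∈ W).card := by
    intro W hW
    obtain ⟨⟨hWne, htight⟩, _⟩ := hTmem W hW
    have hJW := hJ W hWne
    have : ((J.filter fun e => tail e ∈ W ∧ head e ∈ W).card : ℤ)
        ≤ ((I.filter fun e => tail e ∈ W ∧ head e ∈ W).card : ℤ) := by linarith
    exact_mod_cast this
  have hsdiff : J \ FBJ ⊆ I \ FBI := by
    intro e he
    rw [Finset.mem_sdiff] at he ⊢
    obtain ⟨heJ, heF⟩ := he
    have heI : e ∈ I := by
      by_contra heI
      obtain ⟨W, hWt, ht, hh⟩ := key e heJ heI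
      obtain ⟨Wm, hWsub, hWmt, hWmmax⟩ := exists_maximal_tight hWt
      have hWmT : Wm ∈ T := by
        simp only [hT, Finset.mem_filter, Finset.mem_univ, true_and]
        exact ⟨hWmt, hWmmax⟩
      exact heF (Finset.mem_biUnion.2 ⟨Wm, hWmT,
        Finset.mem_filter.2 ⟨heJ, hWsub ht, hWsub hh⟩⟩)
    refine ⟨heI, fun heFI => ?_⟩
    obtain ⟨W, hWT, heW⟩ := Finset.mem_biUnion.1 heFI
    rw [Finset.mem_filter] at heW
    exact heF (Finset.mem_biUnion.2 ⟨W, hWT, Finset.mem_filter.2 ⟨heJ, heW.2⟩⟩)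
  have hJsplit : (J \ FBJ).card + FBJ.card = J.card :=
    Finset.card_sdiff_add_card_eq_card hFBJsub
  have hIsplit : (I \ FBI).card + FBI.card = I.card :=
    Finset.card_sdiff_add_card_eq_card hFBIsub
  have h1 : FBJ.card ≤ FBI.card := by
    rw [hJcount, hIcount]
    exact Finset.sum_le_sum hWle
  have h2 : (J \ FBJ).card ≤ (I \ FBI).card := Finset.card_le_card hsdiff
  omega

end SparseAux

section UnionAux

variable {E : Type} [DecidableEq E]

private lemma union_aug (P Q : Finset E → Prop)
    (hQmono : ∀ ⦃F F'⦄, F' ⊆ F → Q F → Q F')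
    (hPmono : ∀ ⦃F F'⦄, F' ⊆ F → P F → P F')
    (hPaug : ∀ ⦃I J : Finset E⦄, P I → P J → I.card < J.card →
      ∃ e ∈ J, e ∉ I ∧ P (insert e I))
    (hQaug : ∀ ⦃I J : Finset E⦄, Q I → Q J → I.card < J.card →
      ∃ e ∈ J, e ∉ I ∧ Q (insert e I))
    {I J : Finset E}
    (hI : ∃ I₁ I₂, I₁ ∪ I₂ = I ∧ Disjoint I₁ I₂ ∧ P I₁ ∧ Q I₂)
    (hJ : ∃ J₁ J₂, J₁ ∪ J₂ = J ∧ Disjoint J₁ J₂ ∧ P J₁ ∧ Q J₂)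
    (hcard : I.card < J.card) :
    ∃ e ∈ J, e ∉ I ∧
      ∃ F₁ F₂, F₁ ∪ F₂ = insert e I ∧ Disjoint F₁ F₂ ∧ P F₁ ∧ Q F₂ := by
  classical
  set S : Finset ((Finset E × Finset E) × Finset E × Finset E) :=
    ((I.powerset ×ˢ I.powerset) ×ˢ (J.powerset ×ˢ J.powerset)).filter
      (fun x => x.1.1 ∪ x.1.2 = I ∧ Disjoint x.1.1 x.1.2 ∧ P x.1.1 ∧ Q x.1.2 ∧
        x.2.1 ∪ x.2.2 = J ∧ Disjoint x.2.1 x.2.2 ∧ P x.2.1 ∧ Q x.2.2) with hS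
  have hSne : S.Nonempty := by
    obtain ⟨I₁, I₂, hIu, hId, hIP, hIQ⟩ := hI
    obtain ⟨J₁, J₂, hJu, hJd, hJP, hJQ⟩ := hJ
    refine ⟨((I₁, I₂), (J₁, J₂)), ?_⟩
    simp only [hS, Finset.mem_filter, Finset.mem_product, Finset.mem_powerset]
    refine ⟨⟨⟨?_, ?_⟩, ?_, ?_⟩, hIu, hId, hIP, hIQ, hJu, hJd, hJP, hJQ⟩
    · exact hIu ▸ Finset.subset_union_left
    · exact hIu ▸ Finset.subset_union_right
    · exact hJu ▸ Finset.subset_union_left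
    · exact hJu ▸ Finset.subset_union_right
  obtain ⟨x, hxS, hxmax⟩ := Finset.exists_max_image S
    (fun x => (x.1.1 ∩ x.2.1).card + (x.1.2 ∩ x.2.2).card) hSne
  obtain ⟨⟨I₁, I₂⟩, J₁, J₂⟩ := x
  rw [hS, Finset.mem_filter] at hxS
  obtain ⟨hmem, hIu, hId, hIP, hIQ, hJu, hJd, hJP, hJQ⟩ := hxS
  simp only [Finset.mem_product, Finset.mem_powerset] at hmem
  obtain ⟨⟨hI₁sub, hI₂sub⟩, hJ₁sub, hJ₂sub⟩ := hmem
  have hIc : I₁.card + I₂.card = I.card := by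
    rw [← Finset.card_union_of_disjoint hId, hIu]
  have hJc : J₁.card + J₂.card = J.card := by
    rw [← Finset.card_union_of_disjoint hJd, hJu]
  rcases lt_or_ge I₁.card J₁.card with h1 | h1
  · -- augment on the P side
    obtain ⟨e, heJ₁, heI₁, hPe⟩ := hPaug hIP hJP h1
    have heJ : e ∈ J := by rw [← hJu]; exact Finset.mem_union_left _ heJ₁
    by_cases heI : e ∈ I
    · exfalso
      have heI₂ : e ∈ I₂ := by
        have : e ∈ I₁ ∪ I₂ := by rw [hIu]; exact heI
        rcases Finset.mem_union.1 this with h | h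
        · exact absurd h heI₁
        · exact h
      have heJ₂ : e ∉ J₂ := Finset.disjoint_left.1 hJd heJ₁
      have hx' : (((insert e I₁, I₂.erase e), (J₁, J₂)) :
          (Finset E × Finset E) × Finset E × Finset E) ∈ S := by
        rw [hS, Finset.mem_filter]
        refine ⟨?_, ?_, ?_, hPe, hQmono (Finset.erase_subset _ _) hIQ,
          hJu, hJd, hJP, hJQ⟩
        · simp only [Finset.mem_product, Finset.mem_powerset]
          exact ⟨⟨Finset.insert_subset heI hI₁sub,
            (Finset.erase_subset _ _).trans hI₂sub⟩, hJ₁sub, hJ₂sub⟩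
        · ext x
          simp only [Finset.mem_union, Finset.mem_insert, Finset.mem_erase, ← hIu]
          by_cases hxe : x = e
          · subst hxe; simp [heI₁, heI₂]
          · simp [hxe]
        · rw [Finset.disjoint_insert_left]
          exact ⟨Finset.notMem_erase _ _,
            hId.mono_right (Finset.erase_subset _ _)⟩
      have hobj := hxmax _ hx'
      have hval₁ : ((insert e I₁) ∩ J₁).card = (I₁ ∩ J₁).card + 1 := by
        rw [Finset.insert_inter_of_mem heJ₁]
        exact Finset.card_insert_of_notMem (fun h => heI₁ (Finset.mem_inter.1 h).1)
      have hval₂ : (I₂.erase e) ∩ J₂ = I₂ ∩ J₂ := by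
        rw [Finset.erase_inter, Finset.erase_eq_of_notMem
          (fun h => heJ₂ (Finset.mem_inter.1 h).2)]
      simp only [hval₂] at hobj
      omega
    · refine ⟨e, heJ, heI, insert e I₁, I₂, ?_, ?_, hPe, hIQ⟩
      · rw [Finset.insert_union, hIu]
      · rw [Finset.disjoint_insert_left]
        exact ⟨fun h => heI (by rw [← hIu]; exact Finset.mem_union_right _ h), hId⟩
  · -- augment on the Q side
    have h2 : I₂.card < J₂.card := by omega
    obtain ⟨e, heJ₂, heI₂, hQe⟩ := hQaug hIQ hJQ h2
    have heJ : e ∈ J := by rw [← hJu]; exact Finset.mem_union_right _ heJ₂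
    by_cases heI : e ∈ I
    · exfalso
      have heI₁ : e ∈ I₁ := by
        have : e ∈ I₁ ∪ I₂ := by rw [hIu]; exact heI
        rcases Finset.mem_union.1 this with h | h
        · exact h
        · exact absurd h heI₂
      have heJ₁ : e ∉ J₁ := Finset.disjoint_right.1 hJd heJ₂
      have hx' : (((I₁.erase e, insert e I₂), (J₁, J₂)) :
          (Finset E × Finset E) × Finset E × Finset E) ∈ S := by
        rw [hS, Finset.mem_filter]
        refine ⟨?_, ?_, ?_, hPmono (Finset.erase_subset _ _) hIP, hQe,
          hJu, hJd, hJP, hJQ⟩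
        · simp only [Finset.mem_product, Finset.mem_powerset]
          exact ⟨⟨(Finset.erase_subset _ _).trans hI₁sub,
            Finset.insert_subset heI hI₂sub⟩, hJ₁sub, hJ₂sub⟩
        · ext x
          simp only [Finset.mem_union, Finset.mem_insert, Finset.mem_erase, ← hIu]
          by_cases hxe : x = e
          · subst hxe; simp [heI₁, heI₂]
          · simp [hxe]
        · rw [Finset.disjoint_insert_right]
          exact ⟨Finset.notMem_erase _ _,
            hId.mono_left (Finset.erase_subset _ _)⟩
      have hobj := hxmax _ hx'
      have hval₂ : ((insert e I₂) ∩ J₂).card = (I₂ ∩ J₂).card + 1 := by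
        rw [Finset.insert_inter_of_mem heJ₂]
        exact Finset.card_insert_of_notMem (fun h => heI₂ (Finset.mem_inter.1 h).1)
      have hval₁ : (I₁.erase e) ∩ J₁ = I₁ ∩ J₁ := by
        rw [Finset.erase_inter, Finset.erase_eq_of_notMem
          (fun h => heJ₁ (Finset.mem_inter.1 h).2)]
      simp only [hval₁] at hobj
      omega
    · refine ⟨e, heJ, heI, I₁, insert e I₂, ?_, ?_, hIP, hQe⟩
      · rw [Finset.union_insert, hIu]
      · rw [Finset.disjoint_insert_right]
        exact ⟨fun h => heI (by rw [← hIu]; exact Finset.mem_union_left _ h), hId⟩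

end UnionAux

section ABAux

variable {V E : Type} [Fintype V] [DecidableEq V] [DecidableEq E]
variable {tail head : E → V} {red : E → Bool}

private lemma absparse_iff_partition (a b : ℕ) (F : Finset E) :
    ABSparseOn tail head red a b F ↔
      ∃ F₁ F₂, F₁ ∪ F₂ = F ∧ Disjoint F₁ F₂ ∧ SparseOn tail head (a : ℤ) (a : ℤ) F₁ ∧
        ((∀ e ∈ F₂, red e = false) ∧ SparseOn tail head (b : ℤ) (b : ℤ) F₂) := by
  constructor
  · rintro ⟨B', hB', hsa, hsb⟩
    refine ⟨(F.filter fun e => red e = true) ∪ B',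
      (F.filter fun e => red e = false) \ B', ?_, ?_, hsa, ?_, hsb⟩
    · apply Finset.Subset.antisymm
      · refine Finset.union_subset (Finset.union_subset (Finset.filter_subset _ _)
          (hB'.trans (Finset.filter_subset _ _))) ?_
        exact (Finset.sdiff_subset).trans (Finset.filter_subset _ _)
      · intro e he
        by_cases hred : red e = true
        · exact Finset.mem_union_left _ (Finset.mem_union_left _
            (Finset.mem_filter.2 ⟨he, hred⟩))
        · have hred' : red e = false := by
            cases h : red e
            · rfl
            · exact absurd h hred
          by_cases heB : e ∈ B'
          · exact Finset.mem_union_left _ (Finset.mem_union_right _ heB)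
          · exact Finset.mem_union_right _
              (Finset.mem_sdiff.2 ⟨Finset.mem_filter.2 ⟨he, hred'⟩, heB⟩)
    · rw [Finset.disjoint_left]
      intro e he₁ he₂
      rw [Finset.mem_sdiff, Finset.mem_filter] at he₂
      rcases Finset.mem_union.1 he₁ with h | h
      · rw [Finset.mem_filter] at h
        rw [h.2] at he₂
        exact Bool.noConfusion he₂.1.2
      · exact he₂.2 h
    · intro e he
      exact (Finset.mem_filter.1 (Finset.mem_sdiff.1 he).1).2
  · rintro ⟨F₁, F₂, hu, hd, hP, hQb, hQs⟩
    have hF₁sub : F₁ ⊆ F := by rw [← hu]; exact Finset.subset_union_left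
    refine ⟨F₁.filter fun e => red e = false, ?_, ?_, ?_⟩
    · intro e he
      rw [Finset.mem_filter] at he ⊢
      exact ⟨hF₁sub he.1, he.2⟩
    · refine sparse_mono ?_ hP
      refine Finset.union_subset ?_ (Finset.filter_subset _ _)
      intro e he
      rw [Finset.mem_filter] at he
      have : e ∈ F₁ ∪ F₂ := by rw [hu]; exact he.1
      rcases Finset.mem_union.1 this with h | h
      · exact h
      · rw [hQb e h] at he
        exact Bool.noConfusion he.2
    · refine sparse_mono ?_ hQs
      intro e he
      rw [Finset.mem_sdiff, Finset.mem_filter] at he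
      obtain ⟨⟨heF, hered⟩, heB⟩ := he
      have : e ∈ F₁ ∪ F₂ := by rw [hu]; exact heF
      rcases Finset.mem_union.1 this with h | h
      · exact absurd (Finset.mem_filter.2 ⟨h, hered⟩) heB
      · exact h

private lemma absparse_empty (a b : ℕ) (ha : 0 < a) (hb : 0 < b) :
    ABSparseOn tail head red a b (∅ : Finset E) := by
  refine ⟨∅, by simp, ?_, ?_⟩
  · simp only [Finset.filter_empty, Finset.union_empty]
    exact sparse_kk_empty (by exact_mod_cast ha)
  · simp only [Finset.filter_empty, Finset.sdiff_empty]
    exact sparse_kk_empty (by exact_mod_cast hb)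

private lemma absparse_mono {a b : ℕ} {F F' : Finset E} (hsub : F' ⊆ F)
    (h : ABSparseOn tail head red a b F) : ABSparseOn tail head red a b F' := by
  obtain ⟨B', hB', hsa, hsb⟩ := h
  refine ⟨B' ∩ F', ?_, ?_, ?_⟩
  · intro e he
    rw [Finset.mem_inter] at he
    rw [Finset.mem_filter]
    exact ⟨he.2, (Finset.mem_filter.1 (hB' he.1)).2⟩
  · refine sparse_mono ?_ hsa
    refine Finset.union_subset ?_ ?_
    · exact (Finset.filter_subset_filter _ hsub).trans Finset.subset_union_left
    · exact Finset.inter_subset_left.trans Finset.subset_union_right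
  · refine sparse_mono ?_ hsb
    intro e he
    rw [Finset.mem_sdiff, Finset.mem_filter] at he
    obtain ⟨⟨heF', hered⟩, heB⟩ := he
    rw [Finset.mem_sdiff, Finset.mem_filter]
    refine ⟨⟨hsub heF', hered⟩, fun h => heB (Finset.mem_inter.2 ⟨h, heF'⟩)⟩

end ABAux


/-- the `[a,b]`-sparse edge sets of a bicolored multigraph are the
independent sets of a matroid on the edge set. -/
theorem stmt2 {n : ℕ} {E : Type} [Fintype E] [DecidableEq E] (hn : 0 < n)
    (tail head : E → Fin n) (hlt : ∀ e, tail e < head e)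
    (red : E → Bool) (a b : ℕ) (ha : 0 < a) (hb : 0 < b) :
    ∃ M : Matroid E, M.E = Set.univ ∧
      ∀ F : Finset E, (M.Indep ↑F ↔ ABSparseOn tail head red a b F) := by
  classical
  have ha' : (1 : ℤ) ≤ (a : ℤ) := by exact_mod_cast ha
  have hb' : (1 : ℤ) ≤ (b : ℤ) := by exact_mod_cast hb
  have hempty : ABSparseOn tail head red a b (∅ : Finset E) := absparse_empty a b ha hb
  have hmono : ∀ ⦃I J : Finset E⦄, ABSparseOn tail head red a b J → I ⊆ J →
      ABSparseOn tail head red a b I := fun I J hJ hIJ => absparse_mono hIJ hJ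
  have haug : ∀ ⦃I J : Finset E⦄, ABSparseOn tail head red a b I →
      ABSparseOn tail head red a b J → I.card < J.card →
      ∃ e ∈ J, e ∉ I ∧ ABSparseOn tail head red a b (insert e I) := by
    intro I J hI hJ hc
    rw [absparse_iff_partition] at hI hJ
    obtain ⟨e, heJ, heI, hrep⟩ := union_aug
      (fun F => SparseOn tail head (a : ℤ) (a : ℤ) F)
      (fun F => (∀ e ∈ F, red e = false) ∧ SparseOn tail head (b : ℤ) (b : ℤ) F)
      (fun F F' hsub h => ⟨fun e he => h.1 e (hsub he), sparse_mono hsub h.2⟩)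
      (fun F F' hsub h => sparse_mono hsub h)
      (fun I' J' hI' hJ' hc' => count_aug ha' hI' hJ' hc')
      (fun I' J' hI' hJ' hc' => by
        obtain ⟨e, he, hne, hsp⟩ := count_aug hb' hI'.2 hJ'.2 hc'
        refine ⟨e, he, hne, ?_, hsp⟩
        intro x hx
        rcases Finset.mem_insert.1 hx with h | h
        · exact h ▸ hJ'.1 e he
        · exact hI'.1 x h)
      hI hJ hc
    exact ⟨e, heJ, heI, (absparse_iff_partition a b _).2 hrep⟩
  refine ⟨(IndepMatroid.ofFinset Set.univ (fun F => ABSparseOn tail head red a b F)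
    hempty hmono haug (fun I _ => Set.subset_univ _)).matroid, rfl, fun F => ?_⟩
  exact IndepMatroid.ofFinset_indep Set.univ _ hempty hmono haug (fun I _ => Set.subset_univ _)
end

section
/- Let k ≥ 1, let G be a (k,k)-graph on n vertices, and let W be a proper block of G. Then the contraction G/H of G by W is a (k,k)-graph (on n − |W| + 1 vertices). -/
open MvPolynomial

lemma card_filter_subtype_aux {E : Type} [Fintype E]
    (q : E → Prop) [DecidablePred q] (p : E → Prop) [DecidablePred p] :
    (Finset.univ.filter fun e : {e : E // q e} => p e.1).card
      = (Finset.univ.filter fun e : E => q e ∧ p e).card := by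
  rw [← Fintype.card_subtype, ← Fintype.card_subtype]
  exact Fintype.card_congr (Equiv.subtypeSubtypeEquivSubtypeInter q p)

/-- the contraction of a `(k,k)`-graph by a proper block `W` is a
`(k,k)`-graph (on `n − |W| + 1` vertices). -/
theorem stmt3 {n : ℕ} {E : Type} [Fintype E] [DecidableEq E] (k : ℕ) (hk : 1 ≤ k)
    (hn : 0 < n) (tail head : E → Fin n) (hlt : ∀ e, tail e < head e)
    (hsparse : SparseOn tail head (k : ℤ) (k : ℤ) (Finset.univ : Finset E))
    (hcard : (Fintype.card E : ℤ) = k * n - k)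
    (W : Finset (Fin n)) (hblock : IsProperBlock tail head k W) :
    SparseOn (fun e : {e : E // ¬(tail e ∈ W ∧ head e ∈ W)} => contrMap W (tail e.1))
        (fun e => contrMap W (head e.1)) (k : ℤ) (k : ℤ) Finset.univ ∧
      (Fintype.card {e : E // ¬(tail e ∈ W ∧ head e ∈ W)} : ℤ) =
        k * Fintype.card (ContrV n W) - k ∧
      Fintype.card (ContrV n W) = n - W.card + 1 := by
  classical
  obtain ⟨hW2, hWn, hWsp, hWtight⟩ := hblock
  have hWne : W.Nonempty := Finset.card_pos.mp (by omega)
  have hWle : W.card ≤ n := by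
    have := W.card_le_card (Finset.subset_univ W)
    simpa using this
  -- cardinality facts
  have hcV : Fintype.card (ContrV n W) = n - W.card + 1 := by
    have h1 : Fintype.card {v : Fin n // v ∉ W} = n - W.card := by
      have := Fintype.card_subtype_compl (fun v : Fin n => v ∈ W)
      simpa [Fintype.card_coe] using this
    simp [ContrV, Fintype.card_sum, h1]
  have hcE' : (Fintype.card {e : E // ¬(tail e ∈ W ∧ head e ∈ W)} : ℤ)
      = (k : ℤ) * n - (k : ℤ) * W.card := by
    have h1 : Fintype.card {e : E // ¬(tail e ∈ W ∧ head e ∈ W)}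
        = (Finset.univ.filter fun e : E => ¬(tail e ∈ W ∧ head e ∈ W)).card :=
      Fintype.card_subtype _
    have h2 := Finset.card_filter_add_card_filter_not
      (s := (Finset.univ : Finset E)) (p := fun e : E => tail e ∈ W ∧ head e ∈ W)
    rw [Finset.card_univ] at h2
    have h3 : ((Finset.univ.filter fun e : E => tail e ∈ W ∧ head e ∈ W).card : ℤ)
        + ((Finset.univ.filter fun e : E => ¬(tail e ∈ W ∧ head e ∈ W)).card : ℤ)
        = (Fintype.card E : ℤ) := by exact_mod_cast h2
    rw [h1]
    rw [hcard, hWtight] at h3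
    linarith
  refine ⟨?_, ?_, hcV⟩
  · intro W' hW'
    set A : Finset (Fin n) :=
      Finset.univ.filter (fun v => v ∉ W ∧ contrMap W v ∈ W') with hA
    have hmemA : ∀ v : Fin n, v ∈ A ↔ (v ∉ W ∧ contrMap W v ∈ W') := by
      intro v; simp [hA]
    have hAW : Disjoint A W := by
      rw [Finset.disjoint_left]
      intro v hv hvW
      exact ((hmemA v).mp hv).1 hvW
    have hmem : ∀ v : Fin n, contrMap W v ∈ W' ↔
        (v ∈ A ∨ (v ∈ W ∧ Sum.inr () ∈ W')) := by
      intro v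
      by_cases h : v ∈ W
      · simp [contrMap, h, hmemA]
      · simp [contrMap, h, hmemA]
    by_cases hr : Sum.inr () ∈ W'
    · -- the contracted vertex is in W'
      set U : Finset (Fin n) := W ∪ A with hU
      have hmemU : ∀ v : Fin n, contrMap W v ∈ W' ↔ v ∈ U := by
        intro v
        rw [hmem v, hU, Finset.mem_union]
        constructor
        · rintro (h | ⟨h, _⟩)
          · exact Or.inr h
          · exact Or.inl h
        · rintro (h | h)
          · exact Or.inr ⟨h, hr⟩
          · exact Or.inl h
      have hUcard : U.card = W.card + A.card :=
        Finset.card_union_of_disjoint hAW.symm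
      -- |W'| = |A| + 1
      have hW'card : W'.card = A.card + 1 := by
        have hbij : A.card = (W'.erase (Sum.inr ())).card := by
          apply Finset.card_bij (fun v _ => contrMap W v)
          · intro v hv
            obtain ⟨hvW, hvW'⟩ := (hmemA v).mp hv
            rw [Finset.mem_erase]
            refine ⟨?_, hvW'⟩
            simp [contrMap, hvW]
          · intro v1 hv1 v2 hv2 h
            have h1 := ((hmemA v1).mp hv1).1
            have h2 := ((hmemA v2).mp hv2).1
            simp [contrMap, h1, h2] at h
            exact h
          · intro b hb
            rw [Finset.mem_erase] at hb
            obtain ⟨hbne, hbW'⟩ := hb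
            rcases b with x | u
            · refine ⟨x.1, ?_, ?_⟩
              · rw [hmemA]
                refine ⟨x.2, ?_⟩
                simpa [contrMap, x.2] using hbW'
              · simp [contrMap, x.2]
            · exact absurd rfl hbne
        have := Finset.card_erase_of_mem hr
        have hpos : 0 < W'.card := Finset.card_pos.mpr ⟨_, hr⟩
        omega
      -- edge counts
      have hkey : (Finset.univ.filter fun e : {e : E // ¬(tail e ∈ W ∧ head e ∈ W)} =>
            contrMap W (tail e.1) ∈ W' ∧ contrMap W (head e.1) ∈ W').card
          = (Finset.univ.filter fun e : E =>
              ¬(tail e ∈ W ∧ head e ∈ W) ∧ (tail e ∈ U ∧ head e ∈ U)).card := by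
        apply Finset.card_bij (fun e _ => e.1)
        · intro e he
          rw [Finset.mem_filter] at he ⊢
          exact ⟨Finset.mem_univ _, e.2, (hmemU _).mp he.2.1, (hmemU _).mp he.2.2⟩
        · intro e1 _ e2 _ h
          exact Subtype.ext h
        · intro b hb
          rw [Finset.mem_filter] at hb
          refine ⟨⟨b, hb.2.1⟩, ?_, rfl⟩
          rw [Finset.mem_filter]
          exact ⟨Finset.mem_univ _, (hmemU _).mpr hb.2.2.1, (hmemU _).mpr hb.2.2.2⟩
      have hsplit : (Finset.univ.filter fun e : E =>
            ¬(tail e ∈ W ∧ head e ∈ W) ∧ (tail e ∈ U ∧ head e ∈ U))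
          = (Finset.univ.filter fun e : E => tail e ∈ U ∧ head e ∈ U)
            \ (Finset.univ.filter fun e : E => tail e ∈ W ∧ head e ∈ W) := by
        ext e
        simp only [Finset.mem_filter, Finset.mem_sdiff, Finset.mem_univ, true_and]
        tauto
      have hsub : (Finset.univ.filter fun e : E => tail e ∈ W ∧ head e ∈ W)
          ⊆ (Finset.univ.filter fun e : E => tail e ∈ U ∧ head e ∈ U) := by
        intro e he
        simp only [Finset.mem_filter, Finset.mem_univ, true_and] at he ⊢
        exact ⟨Finset.mem_union_left _ he.1, Finset.mem_union_left _ he.2⟩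
      have hcsd := Finset.card_sdiff_of_subset hsub
      have hle1 := hsparse U ⟨hWne.choose, Finset.mem_union_left _ hWne.choose_spec⟩
      have hle2 : ((Finset.univ.filter fun e : E => tail e ∈ W ∧ head e ∈ W).card : ℤ)
          ≤ ((Finset.univ.filter fun e : E => tail e ∈ U ∧ head e ∈ U).card : ℤ) := by
        exact_mod_cast Finset.card_le_card hsub
      have hnatle := Finset.card_le_card hsub
      rw [hkey, hsplit, hcsd, Nat.cast_sub hnatle, hWtight]
      have hU' : ((U.card : ℤ)) = (W.card : ℤ) + A.card := by exact_mod_cast hUcard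
      have hW'c : ((W'.card : ℤ)) = (A.card : ℤ) + 1 := by exact_mod_cast hW'card
      rw [hU'] at hle1
      rw [hW'c]
      nlinarith [hle1]
    · -- the contracted vertex is not in W'
      have hmemU : ∀ v : Fin n, contrMap W v ∈ W' ↔ v ∈ A := by
        intro v
        rw [hmem v]
        constructor
        · rintro (h | ⟨_, h⟩)
          · exact h
          · exact absurd h hr
        · exact Or.inl
      have hAne : A.Nonempty := by
        obtain ⟨b, hb⟩ := hW'
        rcases b with x | u
        · exact ⟨x.1, (hmemA x.1).mpr ⟨x.2, by simpa [contrMap, x.2] using hb⟩⟩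
        · exact absurd hb hr
      have hAcard : A.card = W'.card := by
        apply Finset.card_bij (fun v _ => contrMap W v)
        · intro v hv
          exact ((hmemA v).mp hv).2
        · intro v1 hv1 v2 hv2 h
          have h1 := ((hmemA v1).mp hv1).1
          have h2 := ((hmemA v2).mp hv2).1
          simp [contrMap, h1, h2] at h
          exact h
        · intro b hb
          rcases b with x | u
          · refine ⟨x.1, ?_, ?_⟩
            · rw [hmemA]
              refine ⟨x.2, ?_⟩
              simpa [contrMap, x.2] using hb
            · simp [contrMap, x.2]
          · exact absurd hb hr
      have hkey : (Finset.univ.filter fun e : {e : E // ¬(tail e ∈ W ∧ head e ∈ W)} =>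
            contrMap W (tail e.1) ∈ W' ∧ contrMap W (head e.1) ∈ W').card
          = (Finset.univ.filter fun e : E =>
              ¬(tail e ∈ W ∧ head e ∈ W) ∧ (tail e ∈ A ∧ head e ∈ A)).card := by
        apply Finset.card_bij (fun e _ => e.1)
        · intro e he
          rw [Finset.mem_filter] at he ⊢
          exact ⟨Finset.mem_univ _, e.2, (hmemU _).mp he.2.1, (hmemU _).mp he.2.2⟩
        · intro e1 _ e2 _ h
          exact Subtype.ext h
        · intro b hb
          rw [Finset.mem_filter] at hb
          refine ⟨⟨b, hb.2.1⟩, ?_, rfl⟩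
          rw [Finset.mem_filter]
          exact ⟨Finset.mem_univ _, (hmemU _).mpr hb.2.2.1, (hmemU _).mpr hb.2.2.2⟩
      have hsimpl : (Finset.univ.filter fun e : E =>
            ¬(tail e ∈ W ∧ head e ∈ W) ∧ (tail e ∈ A ∧ head e ∈ A))
          = (Finset.univ.filter fun e : E => tail e ∈ A ∧ head e ∈ A) := by
        apply Finset.filter_congr
        intro e _
        constructor
        · exact fun h => h.2
        · intro h
          refine ⟨fun hc => ?_, h⟩
          exact ((hmemA (tail e)).mp h.1).1 hc.1
      rw [hkey, hsimpl]
      have := hsparse A hAne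
      rw [hAcard] at this
      simpa using this
  · rw [hcE', hcV]
    have h1 : ((n - W.card + 1 : ℕ) : ℤ) = (n : ℤ) - W.card + 1 := by
      push_cast [Nat.cast_sub hWle]
      ring
    rw [h1]
    ring
end

section
/- Let k ≥ 1, let G be a (k,k)-graph on n vertices, let W be a proper block of G, let u be a vertex not in W, and let w ∈ W. Then there exists ε ∈ {1, −1} such that C_G = ε · C_H · C_{G/H}, where C_G is the pure condition of G with standard tie-down at u, C_H is the pure condition of the induced multigraph on W with standard tie-down at w (computed in S using the variables X_(e,i) for edges e induced by W), and C_{G/H} is the pure condition of the contraction G/H with standard tie-down at the image of u (computed in S using the variables X_(e,i) for edges e not induced by W). -/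
open MvPolynomial

lemma blockdet {R : Type*} [CommRing R] {ρ₁ ρ₂ γ₁ γ₂ : Type}
    [Fintype γ₁] [Fintype γ₂] [DecidableEq γ₁] [DecidableEq γ₂]
    (B : Matrix (ρ₁ ⊕ ρ₂) (γ₁ ⊕ γ₂) R)
    (hz : ∀ r c, B (Sum.inl r) (Sum.inr c) = 0)
    (e₁ : γ₁ ≃ ρ₁) (e₂ : γ₂ ≃ ρ₂) (σ : (γ₁ ⊕ γ₂) ≃ (ρ₁ ⊕ ρ₂)) :
    (B.submatrix σ id).det =
      ((Equiv.Perm.sign (σ.trans (e₁.sumCongr e₂).symm) : ℤ) : R) *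
        ((Matrix.of fun c c' : γ₁ => B (Sum.inl (e₁ c)) (Sum.inl c')).det *
          (Matrix.of fun c c' : γ₂ => B (Sum.inr (e₂ c)) (Sum.inr c')).det) := by
  have h1 : B.submatrix σ id =
      (B.submatrix (e₁.sumCongr e₂) id).submatrix (σ.trans (e₁.sumCongr e₂).symm) id := by
    ext c c'
    simp [Matrix.submatrix_apply]
  have h2 : B.submatrix (e₁.sumCongr e₂) id =
      Matrix.fromBlocks (Matrix.of fun c c' : γ₁ => B (Sum.inl (e₁ c)) (Sum.inl c'))
        0
        (Matrix.of fun (c : γ₂) (c' : γ₁) => B (Sum.inr (e₂ c)) (Sum.inl c'))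
        (Matrix.of fun c c' : γ₂ => B (Sum.inr (e₂ c)) (Sum.inr c')) := by
    ext (c | c) (c' | c') <;>
      simp [Matrix.submatrix_apply, hz]
  rw [h1, Matrix.det_permute, h2, Matrix.det_fromBlocks_zero₁₂]


open Matrix Finset

variable {S : Type*} [CommRing S] {n k : ℕ}

/-- column operation matrix: adds all columns `(v,i)`, `v ∈ W.erase w`, to column `(w,i)`. -/
def Pmat (W : Finset (Fin n)) (w : Fin n) :
    Matrix (Fin n × Fin k) (Fin n × Fin k) S :=
  Matrix.of fun c c' =>
    (if c = c' then 1 else 0) + (if c.1 ∈ W.erase w ∧ c' = (w, c.2) then 1 else 0)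

lemma Pmat_mul_row (W : Finset (Fin n)) (w : Fin n) (hw : w ∈ W)
    (f : Fin n × Fin k → S) (c : Fin n × Fin k) :
    ∑ c', f c' * Pmat (S := S) W w c' c =
      if c.1 = w then ∑ v ∈ W, f (v, c.2) else f c := by
  simp only [Pmat, Matrix.of_apply, mul_add, Finset.sum_add_distrib]
  have h1 : ∑ c', f c' * (if c' = c then 1 else 0) = f c := by
    simp [mul_ite, Finset.sum_ite_eq']
  rw [h1]
  by_cases hc : c.1 = w
  · have hceq : c = (w, c.2) := by
      cases c; simp_all
    have h2 : ∀ c' : Fin n × Fin k,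
        f c' * (if c'.1 ∈ W.erase w ∧ c = (w, c'.2) then (1:S) else 0) =
        if c'.1 ∈ W.erase w ∧ c'.2 = c.2 then f c' else 0 := by
      intro c'
      by_cases h : c'.1 ∈ W.erase w ∧ c'.2 = c.2
      · rw [if_pos h, if_pos ⟨h.1, by rw [hceq, h.2]⟩, mul_one]
      · have h' : ¬(c'.1 ∈ W.erase w ∧ c = (w, c'.2)) := by
          rintro ⟨hm, hcc⟩; exact h ⟨hm, by rw [hcc]⟩
        rw [if_neg h, if_neg h', mul_zero]
    rw [Finset.sum_congr rfl fun c' _ => h2 c', if_pos hc]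
    rw [Fintype.sum_prod_type]
    have h3 : ∀ v : Fin n, (∑ i : Fin k, if v ∈ W.erase w ∧ i = c.2 then f (v, i) else 0)
        = if v ∈ W.erase w then f (v, c.2) else 0 := by
      intro v
      by_cases hv : v ∈ W.erase w
      · simp [hv, Finset.sum_ite_eq']
      · simp [hv]
    rw [Finset.sum_congr rfl fun v _ => h3 v]
    rw [Finset.sum_ite_mem, Finset.univ_inter]
    rw [← Finset.add_sum_erase W _ hw, ← hceq]
  · have h2 : ∀ c' : Fin n × Fin k,
        f c' * (if c'.1 ∈ W.erase w ∧ c = (w, c'.2) then (1:S) else 0) = 0 := by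
      intro c'
      rw [if_neg, mul_zero]
      rintro ⟨-, rfl⟩
      exact hc rfl
    rw [Finset.sum_congr rfl fun c' _ => h2 c', if_neg hc]
    simp

lemma Pmat_det (W : Finset (Fin n)) (w : Fin n) :
    (Pmat (S := S) (k := k) W w).det = 1 := by
  rw [Matrix.twoBlockTriangular_det _ (fun c => c.1 ≠ w)]
  · have h1 : Matrix.toSquareBlockProp (Pmat (S := S) (k := k) W w) (fun c => c.1 ≠ w) = 1 := by
      ext i j
      simp only [Matrix.toSquareBlockProp, Matrix.toBlock_apply, Pmat, Matrix.of_apply]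
      have : ¬(i.1.1 ∈ W.erase w ∧ j.1 = (w, i.1.2)) := by
        rintro ⟨-, hj⟩
        exact j.2 (by rw [hj])
      rw [if_neg this, add_zero, Matrix.one_apply]
      simp [Subtype.ext_iff]
    have h2 : Matrix.toSquareBlockProp (Pmat (S := S) (k := k) W w)
        (fun c => ¬ c.1 ≠ w) = 1 := by
      ext i j
      simp only [Matrix.toSquareBlockProp, Matrix.toBlock_apply, Pmat, Matrix.of_apply]
      have hi : i.1.1 = w := not_not.mp i.2
      have : ¬(i.1.1 ∈ W.erase w ∧ j.1 = (w, i.1.2)) := by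
        rintro ⟨hmem, -⟩
        exact (Finset.ne_of_mem_erase hmem) hi
      rw [if_neg this, add_zero, Matrix.one_apply]
      simp [Subtype.ext_iff]
    rw [h1, h2, Matrix.det_one, Matrix.det_one, mul_one]
  · intro i hi j hj
    simp only [Pmat, Matrix.of_apply]
    have hi' : i.1 = w := not_not.mp hi
    have h1 : ¬ i = j := fun h => hj (h ▸ hi')
    have h2 : ¬(i.1 ∈ W.erase w ∧ j = (w, i.2)) := by
      rintro ⟨hmem, -⟩
      exact (Finset.ne_of_mem_erase hmem) hi'
    rw [if_neg h1, if_neg h2, add_zero]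

lemma sum_edge_row {t h : Fin n} (hth : t ≠ h) (x y : S) (W : Finset (Fin n)) :
    ∑ v ∈ W, (if v = t then x else if v = h then y else 0) =
      (if t ∈ W then x else 0) + (if h ∈ W then y else 0) := by
  have : ∀ v : Fin n, (if v = t then x else if v = h then y else 0) =
      (if v = t then x else 0) + (if v = h then y else 0) := by
    intro v
    by_cases h1 : v = t
    · subst h1
      rw [if_pos rfl, if_pos rfl, if_neg hth, add_zero]
    · rw [if_neg h1, if_neg h1, zero_add]
  rw [Finset.sum_congr rfl fun v _ => this v, Finset.sum_add_distrib,
    Finset.sum_ite_eq' W t (fun _ => x), Finset.sum_ite_eq' W h (fun _ => y)]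

def eVert {n : ℕ} (W : Finset (Fin n)) (w : Fin n) (hw : w ∈ W) :
    Fin n ≃ ({v : Fin n // v ∈ W.erase w} ⊕ ContrV n W) where
  toFun v := if h : v ∈ W.erase w then Sum.inl ⟨v, h⟩ else Sum.inr (contrMap W v)
  invFun := Sum.elim (fun x => x.1) (Sum.elim (fun x => x.1) (fun _ => w))
  left_inv v := by
    by_cases h : v ∈ W.erase w
    · simp [h]
    · simp only [dif_neg h]
      unfold contrMap
      by_cases h2 : v ∈ W
      · have : v = w := by
          by_contra hne
          exact h (Finset.mem_erase.mpr ⟨hne, h2⟩)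
        subst this; simp [hw]
      · simp [h2]
  right_inv x := by
    rcases x with ⟨v, h⟩ | (⟨v, h⟩ | ⟨⟩)
    · simp [h]
    · have h1 : v ∉ W.erase w := fun hc => h (Finset.mem_of_mem_erase hc)
      simp [h1, contrMap, h]
    · have h1 : w ∉ W.erase w := Finset.notMem_erase w W
      simp [h1, contrMap, hw]

def eW {n : ℕ} (W : Finset (Fin n)) (w : Fin n) (hw : w ∈ W) :
    {v : Fin n // v ∈ W} ≃ (Unit ⊕ {v : Fin n // v ∈ W.erase w}) where
  toFun x := if h : x.1 ∈ W.erase w then Sum.inr ⟨x.1, h⟩ else Sum.inl ()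
  invFun := Sum.elim (fun _ => ⟨w, hw⟩) (fun x => ⟨x.1, Finset.mem_of_mem_erase x.2⟩)
  left_inv x := by
    by_cases h : x.1 ∈ W.erase w
    · simp [h]
    · have : x.1 = w := by
        by_contra hne
        exact h (Finset.mem_erase.mpr ⟨hne, x.2⟩)
      simp only [dif_neg h, Sum.elim_inl]
      exact Subtype.ext this.symm
  right_inv x := by
    rcases x with ⟨⟩ | ⟨v, h⟩
    · have h1 : w ∉ W.erase w := Finset.notMem_erase w W
      simp [h1]
    · simp [h]

lemma card_block {n : ℕ} {E : Type} [Fintype E] [DecidableEq E] {k : ℕ}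
    (tail head : E → Fin n) (W : Finset (Fin n)) (w : Fin n) (hw : w ∈ W)
    (hW2 : 2 ≤ W.card)
    (htight : ((Finset.univ.filter fun e => tail e ∈ W ∧ head e ∈ W).card : ℤ) =
      (k : ℤ) * (W.card : ℤ) - (k : ℤ)) :
    Fintype.card ({v : Fin n // v ∈ W.erase w} × Fin k) =
      Fintype.card {e : E // tail e ∈ W ∧ head e ∈ W} := by
  have h1 : Fintype.card {v : Fin n // v ∈ W.erase w} = (W.erase w).card :=
    Fintype.card_coe (W.erase w) |>.symm ▸ rfl
  have h2 : Fintype.card {e : E // tail e ∈ W ∧ head e ∈ W} =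
      (Finset.univ.filter fun e => tail e ∈ W ∧ head e ∈ W).card := by
    rw [Fintype.card_subtype]
  rw [Fintype.card_prod, h2, Fintype.card_fin]
  have h3 : Fintype.card {v : Fin n // v ∈ W.erase w} = (W.erase w).card := by
    exact Fintype.card_coe (W.erase w)
  rw [h3, Finset.card_erase_of_mem hw]
  have h4 : (1:ℕ) ≤ W.card := le_trans (by norm_num) hW2
  have h5 : ((W.card - 1 : ℕ) : ℤ) = (W.card : ℤ) - 1 := by
    push_cast [h4]; ring
  have : (((W.card - 1) * k : ℕ) : ℤ) =
      (((Finset.univ.filter fun e => tail e ∈ W ∧ head e ∈ W).card : ℕ) : ℤ) := by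
    push_cast [h4]
    rw [htight]; ring
  exact_mod_cast this

/-- if `W` is a proper block of a `(k,k)`-graph `G`, then the pure
condition factors, up to sign, as `C_G = ± C_H · C_{G/H}`. -/
theorem stmt4 {n : ℕ} {E : Type} [Fintype E] [DecidableEq E] (k : ℕ) (hk : 1 ≤ k)
    (tail head : E → Fin n) (hlt : ∀ e, tail e < head e)
    (hsparse : SparseOn tail head (k : ℤ) (k : ℤ) (Finset.univ : Finset E))
    (hcard : (Fintype.card E : ℤ) = k * n - k)
    (W : Finset (Fin n)) (hblock : IsProperBlock tail head k W)
    (u : Fin n) (hu : u ∉ W) (w : Fin n) (hw : w ∈ W)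
    (σG : (E ⊕ Fin k) ≃ (Fin n × Fin k))
    (σH : ({e : E // tail e ∈ W ∧ head e ∈ W} ⊕ Fin k) ≃ ({v : Fin n // v ∈ W} × Fin k))
    (σQ : ({e : E // ¬(tail e ∈ W ∧ head e ∈ W)} ⊕ Fin k) ≃ (ContrV n W × Fin k)) :
    ∃ ε : ℝ, (ε = 1 ∨ ε = -1) ∧
      pureCondBar k tail head id u σG =
        C ε *
          (pureCondBar k
              (fun e : {e : E // tail e ∈ W ∧ head e ∈ W} =>
                (⟨tail e.1, e.2.1⟩ : {v : Fin n // v ∈ W}))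
              (fun e => (⟨head e.1, e.2.2⟩ : {v : Fin n // v ∈ W}))
              (fun e => e.1) ⟨w, hw⟩ σH *
            pureCondBar k
              (fun e : {e : E // ¬(tail e ∈ W ∧ head e ∈ W)} => contrMap W (tail e.1))
              (fun e => contrMap W (head e.1))
              (fun e => e.1) (contrMap W u) σQ) := by
  obtain ⟨hW2, hWn, hsp, htight⟩ := hblock
  have hth : ∀ e : E, tail e ≠ head e := fun e => ne_of_lt (hlt e)
  -- the untied rigidity-matrix-with-tie-down rows, rows indexed by E ⊕ Fin k
  set A : Matrix (E ⊕ Fin k) (Fin n × Fin k) (MvPolynomial (E × Fin k) ℝ) :=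
    Matrix.of fun r c =>
      Sum.elim
        (fun e => if c.1 = tail e then (X (e, c.2) : MvPolynomial (E × Fin k) ℝ)
          else if c.1 = head e then -X (e, c.2) else 0)
        (fun i => if c = (u, i) then 1 else 0) r with hAdef
  -- the matrix after the column operations (columns of W summed into the w-columns)
  set A' : Matrix (E ⊕ Fin k) (Fin n × Fin k) (MvPolynomial (E × Fin k) ℝ) :=
    Matrix.of fun r c =>
      if c.1 = w then ∑ v ∈ W, A r (v, c.2) else A r c with hA'def
  have hCG : pureCondBar k tail head id u σG = (A.submatrix σG.symm id).det := by
    unfold pureCondBar pureCond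
    congr 1
  have hColOp : (A.submatrix σG.symm id) * (Pmat W w) = A'.submatrix σG.symm id := by
    refine Matrix.ext fun r c => ?_
    rw [Matrix.mul_apply]
    exact Pmat_mul_row W w hw (fun c' => A (σG.symm r) c') c
  have hdet1 : (A.submatrix σG.symm id).det = (A'.submatrix σG.symm id).det := by
    rw [← hColOp, Matrix.det_mul, Pmat_det, mul_one]
  -- index partitions
  set ι : ({e : E // tail e ∈ W ∧ head e ∈ W} ⊕
      ({e : E // ¬(tail e ∈ W ∧ head e ∈ W)} ⊕ Fin k)) ≃ (E ⊕ Fin k) :=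
    (Equiv.sumAssoc _ _ _).symm.trans ((Equiv.sumCompl (fun e => tail e ∈ W ∧ head e ∈ W)).sumCongr (Equiv.refl (Fin k)))
    with hιdef
  set φ : (({v : Fin n // v ∈ W.erase w} × Fin k) ⊕ (ContrV n W × Fin k)) ≃ (Fin n × Fin k) :=
    (Equiv.sumProdDistrib _ _ _).symm.trans ((eVert W w hw).symm.prodCongr (Equiv.refl (Fin k)))
    with hφdef
  set B : Matrix ({e : E // tail e ∈ W ∧ head e ∈ W} ⊕
      ({e : E // ¬(tail e ∈ W ∧ head e ∈ W)} ⊕ Fin k))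
      (({v : Fin n // v ∈ W.erase w} × Fin k) ⊕ (ContrV n W × Fin k))
      (MvPolynomial (E × Fin k) ℝ) :=
    Matrix.of fun r c => A' (ι r) (φ c) with hBdef
  have hφ1 : ∀ (v : {v : Fin n // v ∈ W.erase w}) (i : Fin k),
      φ (Sum.inl (v, i)) = (v.1, i) := fun v i => rfl
  have hφ2l : ∀ (v : {v : Fin n // v ∉ W}) (i : Fin k),
      φ (Sum.inr (Sum.inl v, i)) = (v.1, i) := fun v i => rfl
  have hφ2r : ∀ i : Fin k, φ (Sum.inr (Sum.inr (), i)) = (w, i) := fun i => rfl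
  have hι1 : ∀ e : {e : E // tail e ∈ W ∧ head e ∈ W}, ι (Sum.inl e) = Sum.inl e.1 := by
    intro e; simp [hιdef]
  have hι2 : ∀ e : {e : E // ¬(tail e ∈ W ∧ head e ∈ W)},
      ι (Sum.inr (Sum.inl e)) = Sum.inl e.1 := by
    intro e; simp [hιdef]
  have hι3 : ∀ i : Fin k, ι (Sum.inr (Sum.inr i)) = Sum.inr i := by
    intro i; simp [hιdef]
  have hreindex : (A'.submatrix σG.symm id).det =
      (B.submatrix (φ.trans (σG.symm.trans ι.symm)) id).det := by
    rw [← Matrix.det_submatrix_equiv_self φ (A'.submatrix σG.symm id)]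
    congr 1
    ext c c'
    simp [hBdef]
  have hz : ∀ (r : {e : E // tail e ∈ W ∧ head e ∈ W}) (c : ContrV n W × Fin k),
      B (Sum.inl r) (Sum.inr c) = 0 := by
    intro r c
    obtain ⟨x, i⟩ := c
    have hB : B (Sum.inl r) (Sum.inr (x, i)) = A' (Sum.inl r.1) (φ (Sum.inr (x, i))) := by
      simp [hBdef, hι1]
    rw [hB]
    rcases x with v | ⟨⟩
    · rw [hφ2l]
      have hvw : v.1 ≠ w := fun h => v.2 (h ▸ hw)
      have h1 : A' (Sum.inl r.1) (v.1, i) = A (Sum.inl r.1) (v.1, i) := by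
        simp [hA'def, hvw]
      rw [h1]
      have h2 : v.1 ≠ tail r.1 := fun h => v.2 (h ▸ r.2.1)
      have h3 : v.1 ≠ head r.1 := fun h => v.2 (h ▸ r.2.2)
      simp [hAdef, h2, h3]
    · rw [hφ2r]
      have h1 : A' (Sum.inl r.1) (w, i) = ∑ v ∈ W, A (Sum.inl r.1) (v, i) := by
        simp [hA'def]
      rw [h1]
      have h2 : ∀ v, A (Sum.inl r.1) (v, i) =
          if v = tail r.1 then (X (r.1, i) : MvPolynomial (E × Fin k) ℝ)
          else if v = head r.1 then -X (r.1, i) else 0 := fun v => by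
        simp [hAdef]
      rw [Finset.sum_congr rfl fun v _ => h2 v,
        sum_edge_row (hth r.1) (X (r.1, i)) (-X (r.1, i)) W,
        if_pos r.2.1, if_pos r.2.2]
      ring
  have he₁ : Nonempty (({v : Fin n // v ∈ W.erase w} × Fin k) ≃
      {e : E // tail e ∈ W ∧ head e ∈ W}) :=
    ⟨Fintype.equivOfCardEq (card_block tail head W w hw hW2 htight)⟩
  obtain ⟨e₁⟩ := he₁
  have hBD := blockdet B hz e₁ σQ.symm (φ.trans (σG.symm.trans ι.symm))
  -- identify the second block with the pure condition of the contraction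
  have hQ : (Matrix.of fun c c' : ContrV n W × Fin k =>
      B (Sum.inr (σQ.symm c)) (Sum.inr c')).det =
      pureCondBar k
        (fun e : {e : E // ¬(tail e ∈ W ∧ head e ∈ W)} => contrMap W (tail e.1))
        (fun e => contrMap W (head e.1)) (fun e => e.1) (contrMap W u) σQ := by
    unfold pureCondBar pureCond
    congr 1
    refine Matrix.ext fun c c' => ?_
    obtain ⟨x, j⟩ := c'
    rcases hc : σQ.symm c with e | i
    · -- edge row
      have hB : B (Sum.inr (σQ.symm c)) (Sum.inr (x, j)) =
          A' (Sum.inl e.1) (φ (Sum.inr (x, j))) := by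
        rw [hc]; simp [hBdef, hι2]
      rw [Matrix.of_apply, Matrix.of_apply, hB, hc]
      have hne := hth e.1
      rcases x with v | ⟨⟩
      · rw [hφ2l]
        have hvw : v.1 ≠ w := fun h => v.2 (h ▸ hw)
        have h1 : A' (Sum.inl e.1) (v.1, j) = A (Sum.inl e.1) (v.1, j) := by
          simp [hA'def, hvw]
        rw [h1]
        by_cases htW : tail e.1 ∈ W <;> by_cases hhW : head e.1 ∈ W
        · exact absurd ⟨htW, hhW⟩ e.2
        · have h2 : v.1 ≠ tail e.1 := fun h => v.2 (h ▸ htW)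
          simp [hAdef, contrMap, htW, hhW, h2, Subtype.ext_iff]
        · have h3 : v.1 ≠ head e.1 := fun h => v.2 (h ▸ hhW)
          simp [hAdef, contrMap, htW, hhW, h3, Subtype.ext_iff]
        · simp [hAdef, contrMap, htW, hhW, Subtype.ext_iff]
      · rw [hφ2r]
        have h1 : A' (Sum.inl e.1) (w, j) = ∑ v ∈ W, A (Sum.inl e.1) (v, j) := by
          simp [hA'def]
        have h2 : ∀ v, A (Sum.inl e.1) (v, j) =
            if v = tail e.1 then (X (e.1, j) : MvPolynomial (E × Fin k) ℝ)
            else if v = head e.1 then -X (e.1, j) else 0 := fun v => by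
          simp [hAdef]
        rw [h1, Finset.sum_congr rfl fun v _ => h2 v,
          sum_edge_row hne (X (e.1, j)) (-X (e.1, j)) W]
        by_cases htW : tail e.1 ∈ W <;> by_cases hhW : head e.1 ∈ W
        · exact absurd ⟨htW, hhW⟩ e.2
        · simp [contrMap, htW, hhW]
        · simp [contrMap, htW, hhW]
        · simp [contrMap, htW, hhW]
    · -- tie-down row
      have hB : B (Sum.inr (σQ.symm c)) (Sum.inr (x, j)) =
          A' (Sum.inr i) (φ (Sum.inr (x, j))) := by
        rw [hc]; simp [hBdef, hι3]
      rw [Matrix.of_apply, Matrix.of_apply, hB, hc]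
      rcases x with v | ⟨⟩
      · rw [hφ2l]
        have hvw : v.1 ≠ w := fun h => v.2 (h ▸ hw)
        have h1 : A' (Sum.inr i) (v.1, j) = A (Sum.inr i) (v.1, j) := by
          simp [hA'def, hvw]
        rw [h1]
        simp [hAdef, contrMap, hu, Prod.ext_iff, Subtype.ext_iff]
      · rw [hφ2r]
        have h1 : A' (Sum.inr i) (w, j) = ∑ v ∈ W, A (Sum.inr i) (v, j) := by
          simp [hA'def]
        rw [h1]
        have h2 : ∀ v ∈ W, A (Sum.inr i) (v, j) = 0 := by
          intro v hv
          have hvu : v ≠ u := fun h => hu (h ▸ hv)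
          simp [hAdef, Prod.ext_iff, hvu]
        rw [Finset.sum_congr rfl h2, Finset.sum_const_zero]
        simp [contrMap, hu, Prod.ext_iff]
  -- identify the first block with the pure condition of the block, up to sign
  have hH : ∃ s₂ : ℤˣ,
      (Matrix.of fun c c' : {v : Fin n // v ∈ W.erase w} × Fin k =>
        B (Sum.inl (e₁ c)) (Sum.inl c')).det =
      ((s₂ : ℤ) : MvPolynomial (E × Fin k) ℝ) *
        pureCondBar k
          (fun e : {e : E // tail e ∈ W ∧ head e ∈ W} =>
            (⟨tail e.1, e.2.1⟩ : {v : Fin n // v ∈ W}))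
          (fun e => (⟨head e.1, e.2.2⟩ : {v : Fin n // v ∈ W}))
          (fun e => e.1) ⟨w, hw⟩ σH := by
    set AH : Matrix ({e : E // tail e ∈ W ∧ head e ∈ W} ⊕ Fin k)
        ({v : Fin n // v ∈ W} × Fin k) (MvPolynomial (E × Fin k) ℝ) :=
      Matrix.of fun r c =>
        Sum.elim
          (fun e : {e : E // tail e ∈ W ∧ head e ∈ W} =>
            if c.1 = (⟨tail e.1, e.2.1⟩ : {v : Fin n // v ∈ W}) then
              (X (e.1, c.2) : MvPolynomial (E × Fin k) ℝ)
            else if c.1 = (⟨head e.1, e.2.2⟩ : {v : Fin n // v ∈ W}) then -X (e.1, c.2)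
            else 0)
          (fun i => if c = ((⟨w, hw⟩ : {v : Fin n // v ∈ W}), i) then 1 else 0) r with hAHdef
    have hCH : pureCondBar k
        (fun e : {e : E // tail e ∈ W ∧ head e ∈ W} =>
          (⟨tail e.1, e.2.1⟩ : {v : Fin n // v ∈ W}))
        (fun e => (⟨head e.1, e.2.2⟩ : {v : Fin n // v ∈ W}))
        (fun e => e.1) ⟨w, hw⟩ σH = (AH.submatrix σH.symm id).det := by
      unfold pureCondBar pureCond
      congr 1
    set ψ : (Fin k ⊕ ({v : Fin n // v ∈ W.erase w} × Fin k)) ≃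
        ({v : Fin n // v ∈ W} × Fin k) :=
      ((Equiv.punitProd (Fin k)).symm.sumCongr (Equiv.refl _)).trans
        ((Equiv.sumProdDistrib _ _ _).symm.trans
          ((eW W w hw).symm.prodCongr (Equiv.refl (Fin k)))) with hψdef
    have hψ1 : ∀ i : Fin k, ψ (Sum.inl i) = ((⟨w, hw⟩ : {v : Fin n // v ∈ W}), i) :=
      fun i => rfl
    have hψ2 : ∀ (v : {v : Fin n // v ∈ W.erase w}) (j : Fin k),
        ψ (Sum.inr (v, j)) =
          ((⟨v.1, Finset.mem_of_mem_erase v.2⟩ : {v : Fin n // v ∈ W}), j) :=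
      fun v j => rfl
    set BH : Matrix (Fin k ⊕ {e : E // tail e ∈ W ∧ head e ∈ W})
        (Fin k ⊕ ({v : Fin n // v ∈ W.erase w} × Fin k)) (MvPolynomial (E × Fin k) ℝ) :=
      Matrix.of fun r c => AH (Equiv.sumComm (Fin k) _ r) (ψ c) with hBHdef
    have hres : (AH.submatrix σH.symm id).det =
        (BH.submatrix (ψ.trans (σH.symm.trans (Equiv.sumComm (Fin k) _).symm)) id).det := by
      rw [← Matrix.det_submatrix_equiv_self ψ (AH.submatrix σH.symm id)]
      congr 1
      refine Matrix.ext fun c c' => ?_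
      simp [hBHdef]
    have hzH : ∀ (i : Fin k) (c : {v : Fin n // v ∈ W.erase w} × Fin k),
        BH (Sum.inl i) (Sum.inr c) = 0 := by
      intro i c
      obtain ⟨v, j⟩ := c
      have hvw : v.1 ≠ w := Finset.ne_of_mem_erase v.2
      have h1 : BH (Sum.inl i) (Sum.inr (v, j)) =
          AH (Sum.inr i) ((⟨v.1, Finset.mem_of_mem_erase v.2⟩ : {v : Fin n // v ∈ W}), j) := by
        simp [hBHdef, hψ2]
      rw [h1]
      simp [hAHdef, Prod.ext_iff, Subtype.ext_iff, hvw]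
    have hBD2 := blockdet BH hzH (Equiv.refl (Fin k)) e₁
      (ψ.trans (σH.symm.trans (Equiv.sumComm (Fin k) _).symm))
    have hD1 : (Matrix.of fun i j : Fin k =>
        BH (Sum.inl ((Equiv.refl (Fin k)) i)) (Sum.inl j)).det = 1 := by
      have : (Matrix.of fun i j : Fin k =>
          BH (Sum.inl ((Equiv.refl (Fin k)) i)) (Sum.inl j)) = 1 := by
        refine Matrix.ext fun i j => ?_
        have h1 : BH (Sum.inl i) (Sum.inl j) =
            AH (Sum.inr i) ((⟨w, hw⟩ : {v : Fin n // v ∈ W}), j) := by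
          simp [hBHdef, hψ1]
        simp [h1, hAHdef, Matrix.one_apply, Prod.ext_iff, eq_comm]
      rw [this, Matrix.det_one]
    have hD2 : (Matrix.of fun c c' : {v : Fin n // v ∈ W.erase w} × Fin k =>
        BH (Sum.inr (e₁ c)) (Sum.inr c')) =
        (Matrix.of fun c c' : {v : Fin n // v ∈ W.erase w} × Fin k =>
          B (Sum.inl (e₁ c)) (Sum.inl c')) := by
      refine Matrix.ext fun c c' => ?_
      obtain ⟨v, j⟩ := c'
      have hvw : v.1 ≠ w := Finset.ne_of_mem_erase v.2
      have h1 : BH (Sum.inr (e₁ c)) (Sum.inr (v, j)) =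
          AH (Sum.inl (e₁ c))
            ((⟨v.1, Finset.mem_of_mem_erase v.2⟩ : {v : Fin n // v ∈ W}), j) := by
        simp [hBHdef, hψ2]
      have h2 : B (Sum.inl (e₁ c)) (Sum.inl (v, j)) =
          A' (Sum.inl (e₁ c).1) (v.1, j) := by
        simp [hBdef, hι1, hφ1]
      have h3 : A' (Sum.inl (e₁ c).1) (v.1, j) = A (Sum.inl (e₁ c).1) (v.1, j) := by
        simp [hA'def, hvw]
      rw [Matrix.of_apply, Matrix.of_apply, h1, h2, h3]
      simp [hAHdef, hAdef, Subtype.ext_iff]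
    set s₂ : ℤˣ := Equiv.Perm.sign ((ψ.trans (σH.symm.trans
      (Equiv.sumComm (Fin k) {e : E // tail e ∈ W ∧ head e ∈ W}).symm)).trans
      ((Equiv.refl (Fin k)).sumCongr e₁).symm) with hs₂def
    have key : pureCondBar k
        (fun e : {e : E // tail e ∈ W ∧ head e ∈ W} =>
          (⟨tail e.1, e.2.1⟩ : {v : Fin n // v ∈ W}))
        (fun e => (⟨head e.1, e.2.2⟩ : {v : Fin n // v ∈ W}))
        (fun e => e.1) ⟨w, hw⟩ σH =
        ((s₂ : ℤ) : MvPolynomial (E × Fin k) ℝ) *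
          (Matrix.of fun c c' : {v : Fin n // v ∈ W.erase w} × Fin k =>
            B (Sum.inl (e₁ c)) (Sum.inl c')).det := by
      rw [hCH, hres, hBD2, hD1, hD2, one_mul]
    have hs : ((s₂ : ℤ) : MvPolynomial (E × Fin k) ℝ) *
        ((s₂ : ℤ) : MvPolynomial (E × Fin k) ℝ) = 1 := by
      have h := Int.units_mul_self s₂
      have : (((s₂ * s₂ : ℤˣ) : ℤ) : MvPolynomial (E × Fin k) ℝ) = 1 := by
        rw [h]; simp
      rw [← this]
      push_cast
      ring
    refine ⟨s₂, ?_⟩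
    rw [key, ← mul_assoc, hs, one_mul]
  obtain ⟨s₂, hH⟩ := hH
  set s₁ : ℤˣ := Equiv.Perm.sign ((φ.trans (σG.symm.trans ι.symm)).trans
    (e₁.sumCongr σQ.symm).symm) with hs₁def
  refine ⟨(((s₁ * s₂ : ℤˣ) : ℤ) : ℝ), ?_, ?_⟩
  · rcases Int.units_eq_one_or (s₁ * s₂) with h | h <;> rw [h] <;> simp
  · rw [hCG, hdet1, hreindex, hBD, hQ, hH]
    rw [show (MvPolynomial.C (((s₁ * s₂ : ℤˣ) : ℤ) : ℝ) : MvPolynomial (E × Fin k) ℝ) =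
      (((s₁ * s₂ : ℤˣ) : ℤ) : MvPolynomial (E × Fin k) ℝ) from map_intCast _ _]
    push_cast
    ring
end

section
/- Let k ≥ 1 and let G be a multigraph on n vertices with |E| = k·n − k, tied down at a vertex u. Call a function t : E → Fin k a tree decomposition if for every i ∈ Fin k the fiber t⁻¹(i) is a spanning tree of G. Then there exists a sign function ε assigning to each tree decomposition t a value ε(t) ∈ {1, −1} such that the pure condition satisfies C_G = Σ_t ε(t) · Π_{e ∈ E} X_(e, t e), the sum ranging over all tree decompositions t. -/
open MvPolynomial

set_option linter.unusedSectionVars false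
set_option maxHeartbeats 1000000
section Aux

/-- Row has entries in {0,1,-1}, at most one 1 and at most one -1. -/
def RowOK {m : Type*} [Fintype m] [DecidableEq m] (v : m → ℝ) : Prop :=
  (∀ c, v c = 0 ∨ v c = 1 ∨ v c = -1) ∧
    (Finset.univ.filter fun c => v c = 1).card ≤ 1 ∧
    (Finset.univ.filter fun c => v c = -1).card ≤ 1

lemma RowOK.comp {m m' : Type*} [Fintype m] [DecidableEq m] [Fintype m'] [DecidableEq m']
    {v : m → ℝ} (h : RowOK v) {g : m' → m} (hg : Function.Injective g) : RowOK (v ∘ g) := by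
  obtain ⟨h0, h1, h2⟩ := h
  refine ⟨fun c => h0 (g c), le_trans ?_ h1, le_trans ?_ h2⟩ <;>
  · apply Finset.card_le_card_of_injOn g
    · intro x hx; simp_all
    · exact fun a _ b _ hab => hg hab

lemma rowOK_nonzero_card {m : Type*} [Fintype m] [DecidableEq m] {v : m → ℝ} (h : RowOK v) :
    (Finset.univ.filter fun c => v c ≠ 0).card ≤ 2 := by
  obtain ⟨h0, h1, h2⟩ := h
  have : (Finset.univ.filter fun c => v c ≠ 0) ⊆
      (Finset.univ.filter fun c => v c = 1) ∪ (Finset.univ.filter fun c => v c = -1) := by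
    intro c hc
    simp only [Finset.mem_filter, Finset.mem_univ, true_and, Finset.mem_union] at hc ⊢
    rcases h0 c with h | h | h <;> tauto
  calc _ ≤ _ := Finset.card_le_card this
    _ ≤ _ := Finset.card_union_le _ _
    _ ≤ 2 := by omega

lemma uni : ∀ (N : ℕ) (A : Matrix (Fin N) (Fin N) ℝ), (∀ r, RowOK (A r)) →
    A.det = 0 ∨ A.det = 1 ∨ A.det = -1 := by
  intro N
  induction N with
  | zero => intro A _; right; left; exact Matrix.det_fin_zero
  | succ N ih =>
    intro A hA
    by_cases hcol : ∃ c, (Finset.univ.filter fun r => A r c ≠ 0).card ≤ 1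
    · obtain ⟨c, hc⟩ := hcol
      interval_cases h : (Finset.univ.filter fun r => A r c ≠ 0).card
      · -- zero column
        left
        apply Matrix.det_eq_zero_of_column_eq_zero c
        intro r
        by_contra hr
        have : r ∈ Finset.univ.filter fun r => A r c ≠ 0 := by simp [hr]
        simp_all [Finset.card_eq_zero.mp h]
      · -- single nonzero entry at r₀
        obtain ⟨r₀, hr₀⟩ := Finset.card_eq_one.mp h
        have hmem : ∀ r, A r c ≠ 0 ↔ r = r₀ := by
          intro r'
          constructor
          · intro hr
            have : r' ∈ Finset.univ.filter fun r => A r c ≠ 0 := by simp [hr]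
            rw [hr₀] at this; simpa using this
          · rintro rfl
            have : r' ∈ Finset.univ.filter fun r => A r c ≠ 0 := by rw [hr₀]; simp
            simpa using this
        set B : Matrix (Fin (N+1)) (Fin (N+1)) ℝ :=
          A.submatrix (Equiv.swap 0 r₀) (Equiv.swap 0 c) with hB
        have hBrow : ∀ r, RowOK (B r) := by
          intro r
          exact (hA (Equiv.swap 0 r₀ r)).comp (Equiv.swap 0 c).injective
        have hBcol : ∀ r : Fin (N+1), r ≠ 0 → B r 0 = 0 := by
          intro r hr
          have : Equiv.swap 0 r₀ r ≠ r₀ := by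
            intro hcontra
            apply hr
            have h0 : Equiv.swap 0 r₀ (0 : Fin (N+1)) = r₀ := Equiv.swap_apply_left 0 r₀
            exact (Equiv.swap 0 r₀).injective (hcontra.trans h0.symm)
          have h2 : A (Equiv.swap 0 r₀ r) c = 0 := by
            by_contra hcon; exact this ((hmem _).mp hcon)
          simpa [hB, Matrix.submatrix_apply, Equiv.swap_apply_left] using h2
        have hdetB : B.det = B 0 0 * (B.submatrix Fin.succ Fin.succ).det := by
          rw [Matrix.det_succ_column_zero]
          rw [Finset.sum_eq_single 0]
          · simp [Fin.succAbove_zero]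
          · intro i _ hi; rw [hBcol i hi]; ring
          · simp
        have hminor := ih (B.submatrix Fin.succ Fin.succ)
          (fun r => (hBrow r.succ).comp (Fin.succ_injective N))
        have hB00 : B 0 0 = 1 ∨ B 0 0 = -1 := by
          have : B 0 0 = A r₀ c := by
            simp [hB, Matrix.submatrix_apply, Equiv.swap_apply_left]
          have hne : A r₀ c ≠ 0 := (hmem r₀).mpr rfl
          rcases (hA r₀).1 c with h | h | h
          · exact absurd h hne
          · left; rw [this, h]
          · right; rw [this, h]
        have hdetAB : ∃ s : ℝ, (s = 1 ∨ s = -1) ∧ B.det = s * A.det := by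
          have h1 : B.det = (Equiv.Perm.sign (Equiv.swap 0 r₀) : ℤ) *
              (A.submatrix id (Equiv.swap 0 c)).det := by
            have := Matrix.det_permute (Equiv.swap 0 r₀) (A.submatrix id (Equiv.swap 0 c))
            simpa [Matrix.submatrix_submatrix] using this
          have h2 := Matrix.det_permute' (Equiv.swap 0 c) A
          refine ⟨((Equiv.Perm.sign (Equiv.swap 0 r₀) : ℤ) : ℝ) *
            ((Equiv.Perm.sign (Equiv.swap 0 c) : ℤ) : ℝ), ?_, ?_⟩
          · rcases Int.units_eq_one_or (Equiv.Perm.sign (Equiv.swap 0 r₀)) with h | h <;>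
            rcases Int.units_eq_one_or (Equiv.Perm.sign (Equiv.swap 0 c)) with h' | h' <;>
            simp [h, h']
          · rw [h1, h2]; ring
        obtain ⟨s, hs, hSB⟩ := hdetAB
        have : A.det = s * B.det := by
          rcases hs with rfl | rfl <;> [skip; skip] <;> rw [hSB] <;> ring
        rcases hminor with h | h | h <;> rcases hB00 with h' | h' <;>
          rcases hs with rfl | rfl <;> rw [this, hdetB, h, h'] <;> norm_num
    · -- every column has ≥ 2 nonzero entries: det = 0
      push_neg at hcol
      left
      -- each row has exactly one 1 and one -1
      have hsum : ∀ r : Fin (N+1), (Finset.univ.filter fun c => A r c ≠ 0).card = 2 := by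
        by_contra hcon
        push_neg at hcon
        obtain ⟨r, hr⟩ := hcon
        have hlt : (Finset.univ.filter fun c => A r c ≠ 0).card < 2 :=
          lt_of_le_of_ne (rowOK_nonzero_card (hA r)) hr
        have hle : ∑ r : Fin (N+1), (Finset.univ.filter fun c => A r c ≠ 0).card
            < 2 * (N+1) := by
          calc _ < ∑ _r : Fin (N+1), 2 := by
                apply Finset.sum_lt_sum (fun i _ => rowOK_nonzero_card (hA i))
                  ⟨r, Finset.mem_univ r, hlt⟩
            _ = 2 * (N+1) := by simp [mul_comm]
        have hge : 2 * (N+1) ≤ ∑ c : Fin (N+1), (Finset.univ.filter fun r => A r c ≠ 0).card := by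
          calc (2:ℕ) * (N+1) = ∑ _c : Fin (N+1), 2 := by simp [mul_comm]
            _ ≤ _ := Finset.sum_le_sum (fun c _ => hcol c)
        have heq : ∑ r : Fin (N+1), (Finset.univ.filter fun c => A r c ≠ 0).card
            = ∑ c : Fin (N+1), (Finset.univ.filter fun r => A r c ≠ 0).card := by
          simp only [Finset.card_filter]
          exact Finset.sum_comm
        omega
      -- per-row: filter (=1) and (=-1) each card 1
      have hones : ∀ r, (Finset.univ.filter fun c => A r c = 1).card = 1 ∧
          (Finset.univ.filter fun c => A r c = -1).card = 1 := by
        intro r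
        obtain ⟨h0, h1, h2⟩ := hA r
        have hsub : (Finset.univ.filter fun c => A r c ≠ 0) ⊆
            (Finset.univ.filter fun c => A r c = 1) ∪ (Finset.univ.filter fun c => A r c = -1) := by
          intro c hc
          simp only [Finset.mem_filter, Finset.mem_univ, true_and, Finset.mem_union] at hc ⊢
          rcases h0 c with h | h | h <;> tauto
        have := Finset.card_le_card hsub
        have := Finset.card_union_le (Finset.univ.filter fun c => A r c = 1)
          (Finset.univ.filter fun c => A r c = -1)
        rw [hsum r] at *
        omega
      -- row sums are zero
      have hrowsum : ∀ r, ∑ c, A r c = 0 := by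
        intro r
        obtain ⟨h0, _, _⟩ := hA r
        have hdisj : Disjoint (Finset.univ.filter fun c => A r c = 1)
            (Finset.univ.filter fun c => A r c = -1) := by
          rw [Finset.disjoint_filter]
          intro c _ hc1 hc2
          rw [hc1] at hc2; norm_num at hc2
        have hcover : Finset.univ =
            ((Finset.univ.filter fun c => A r c = 1) ∪ (Finset.univ.filter fun c => A r c = -1))
              ∪ (Finset.univ.filter fun c => A r c = 0) := by
          ext c
          simp only [Finset.mem_univ, Finset.mem_union, Finset.mem_filter, true_and, true_iff]
          rcases h0 c with h | h | h <;> tauto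
        have hdisj2 : Disjoint ((Finset.univ.filter fun c => A r c = 1)
            ∪ (Finset.univ.filter fun c => A r c = -1)) (Finset.univ.filter fun c => A r c = 0) := by
          rw [Finset.disjoint_union_left]
          constructor <;>
          · rw [Finset.disjoint_filter]
            intro c _ hc1 hc2
            rw [hc1] at hc2; norm_num at hc2
        calc ∑ c, A r c
            = ∑ c ∈ ((Finset.univ.filter fun c => A r c = 1)
              ∪ (Finset.univ.filter fun c => A r c = -1))
              ∪ (Finset.univ.filter fun c => A r c = 0), A r c := by rw [← hcover]
          _ = (∑ c ∈ (Finset.univ.filter fun c => A r c = 1), A r c)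
              + (∑ c ∈ (Finset.univ.filter fun c => A r c = -1), A r c)
              + (∑ c ∈ (Finset.univ.filter fun c => A r c = 0), A r c) := by
              rw [Finset.sum_union hdisj2, Finset.sum_union hdisj]
          _ = 0 := by
              rw [Finset.sum_congr rfl (fun c hc => (Finset.mem_filter.mp hc).2),
                Finset.sum_congr rfl (fun c hc => (Finset.mem_filter.mp hc).2),
                Finset.sum_congr rfl (fun c hc => (Finset.mem_filter.mp hc).2)]
              simp [Finset.sum_const, (hones r).1, (hones r).2]
      rw [← Matrix.exists_mulVec_eq_zero_iff]
      refine ⟨fun _ => 1, ?_, ?_⟩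
      · intro hcon
        have := congrFun hcon 0
        norm_num at this
      · funext r
        simp [Matrix.mulVec, dotProduct, hrowsum r]

section Graph

variable {n : ℕ} {E : Type} [Fintype E] [DecidableEq E] {k : ℕ}
  (tail head : E → Fin n) (u : Fin n) (σ : (E ⊕ Fin k) ≃ (Fin n × Fin k))
/-- The real coefficient matrix of a color assignment `t`. -/
noncomputable def realN (t : E → Fin k) : Matrix (Fin n × Fin k) (Fin n × Fin k) ℝ :=
  Matrix.of fun r c => Sum.elim
    (fun e => if c = (tail e, t e) then 1 else if c = (head e, t e) then -1 else 0)
    (fun i => if c = (u, i) then (1:ℝ) else 0) (σ.symm r)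

lemma sum_two_aux {α : Type*} [Fintype α] [DecidableEq α] (a b : α) (hab : a ≠ b) (x : α → ℝ) :
    ∑ c, (if c = a then 1 else if c = b then (-1:ℝ) else 0) * x c = x a - x b := by
  have h : ∀ c, (if c = a then 1 else if c = b then (-1:ℝ) else 0) * x c
      = (if c = a then x c else 0) + (if c = b then -x c else 0) := by
    intro c
    by_cases h1 : c = a <;> by_cases h2 : c = b
    · exact absurd (h1 ▸ h2) hab
    all_goals simp [h1, h2, hab, Ne.symm hab]
  simp only [h, Finset.sum_add_distrib, Finset.sum_ite_eq', Finset.mem_univ, if_true]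
  ring

lemma sum_one_aux {α : Type*} [Fintype α] [DecidableEq α] (a : α) (x : α → ℝ) :
    ∑ c, (if c = a then (1:ℝ) else 0) * x c = x a := by
  have h : ∀ c, (if c = a then (1:ℝ) else 0) * x c = (if c = a then x c else 0) := by
    intro c; split_ifs <;> simp
  simp only [h, Finset.sum_ite_eq', Finset.mem_univ, if_true]

/-- Reachability forces equal values along edge-constant functions. -/
lemma reach_eq {T : Finset E} (x : Fin n → ℝ)
    (hx : ∀ e ∈ T, x (tail e) = x (head e)) {a b : Fin n}
    (h : (SimpleGraph.fromRel fun v w => ∃ e ∈ T, tail e = v ∧ head e = w).Reachable a b) :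
    x a = x b := by
  obtain ⟨w⟩ := h
  induction w with
  | nil => rfl
  | cons hadj _ ih =>
    refine Eq.trans ?_ ih
    rw [SimpleGraph.fromRel_adj] at hadj
    obtain ⟨-, ⟨e, he, h1, h2⟩ | ⟨e, he, h1, h2⟩⟩ := hadj
    · rw [← h1, ← h2]; exact hx e he
    · rw [← h1, ← h2]; exact (hx e he).symm

lemma realN_det_ne_zero (hlt : ∀ e, tail e < head e) (t : E → Fin k)
    (hconn : ∀ i : Fin k,
      (SimpleGraph.fromRel fun v w =>
        ∃ e ∈ Finset.univ.filter (fun e => t e = i), tail e = v ∧ head e = w).Connected) :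
    (realN tail head u σ t).det ≠ 0 := by
  intro hdet
  rw [← Matrix.exists_mulVec_eq_zero_iff] at hdet
  obtain ⟨x, hx, hmul⟩ := hdet
  apply hx
  have hedge : ∀ e : E, x (tail e, t e) = x (head e, t e) := by
    intro e
    have h := congrFun hmul (σ (Sum.inl e))
    have hne : ((tail e, t e) : Fin n × Fin k) ≠ (head e, t e) := by
      simp only [ne_eq, Prod.mk.injEq, not_and]
      intro hc; exact absurd hc (hlt e).ne
    simp only [Matrix.mulVec, dotProduct, realN, Matrix.of_apply,
      Equiv.symm_apply_apply, Sum.elim_inl, Pi.zero_apply] at h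
    rw [sum_two_aux _ _ hne] at h
    linarith
  have htie : ∀ i : Fin k, x (u, i) = 0 := by
    intro i
    have h := congrFun hmul (σ (Sum.inr i))
    simpa only [Matrix.mulVec, dotProduct, realN, Matrix.of_apply,
      Equiv.symm_apply_apply, Sum.elim_inr, Pi.zero_apply, sum_one_aux] using h
  funext c
  obtain ⟨v, i⟩ := c
  have : x (v, i) = x (u, i) :=
    (reach_eq tail head (fun w => x (w, i)) (fun e he => by
      have : t e = i := by simpa using he
      rw [← this]; exact hedge e) (((hconn i).preconnected) v u))
  rw [this, htie i]; rfl

lemma realN_det_eq_zero_of_disconnected (hlt : ∀ e, tail e < head e) (t : E → Fin k) (i : Fin k)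
    (hdis : ¬ (SimpleGraph.fromRel fun v w =>
      ∃ e ∈ Finset.univ.filter (fun e => t e = i), tail e = v ∧ head e = w).Connected) :
    (realN tail head u σ t).det = 0 := by
  classical
  set G := SimpleGraph.fromRel fun v w =>
      ∃ e ∈ Finset.univ.filter (fun e : E => t e = i), tail e = v ∧ head e = w with hG
  obtain ⟨v₀, hv₀⟩ : ∃ v, ¬ G.Reachable u v := by
    by_contra hcon
    push_neg at hcon
    haveI : Nonempty (Fin n) := ⟨u⟩
    exact hdis ⟨fun a b => (hcon a).symm.trans (hcon b)⟩
  rw [← Matrix.exists_mulVec_eq_zero_iff]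
  refine ⟨fun p => if p.2 = i ∧ ¬ G.Reachable u p.1 then 1 else 0, ?_, ?_⟩
  · intro hcon
    have := congrFun hcon (v₀, i)
    simp [hv₀] at this
  · funext r
    simp only [Matrix.mulVec, dotProduct, realN, Matrix.of_apply, Pi.zero_apply]
    rcases hsr : σ.symm r with e | j
    · simp only [Sum.elim_inl]
      have hne : ((tail e, t e) : Fin n × Fin k) ≠ (head e, t e) := by
        simp only [ne_eq, Prod.mk.injEq, not_and]
        intro hc; exact absurd hc (hlt e).ne
      rw [sum_two_aux _ _ hne]
      by_cases hti : t e = i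
      · have hadj : G.Adj (tail e) (head e) := by
          rw [hG, SimpleGraph.fromRel_adj]
          exact ⟨(hlt e).ne, Or.inl ⟨e, by simp [hti], rfl, rfl⟩⟩
        have : G.Reachable u (tail e) ↔ G.Reachable u (head e) :=
          ⟨fun h => h.trans hadj.reachable, fun h => h.trans hadj.symm.reachable⟩
        simp only [hti, this]
        split_ifs <;> ring
      · simp only [hti, false_and, if_false]; ring
    · simp only [Sum.elim_inr]
      rw [sum_one_aux]
      simp [SimpleGraph.Reachable.refl]

lemma realN_det_eq_zero_of_big (t : E → Fin k) (i : Fin k)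
    (hbig : n ≤ (Finset.univ.filter fun e => t e = i).card) :
    (realN tail head u σ t).det = 0 := by
  classical
  set v : ({e : E // t e = i} ⊕ Unit) → (Fin n → ℝ) := Sum.elim
    (fun e w => if w = tail e.1 then 1 else if w = head e.1 then -1 else 0)
    (fun _ w => if w = u then 1 else 0) with hv
  have hcard : Module.finrank ℝ (Fin n → ℝ) < Fintype.card ({e : E // t e = i} ⊕ Unit) := by
    rw [Module.finrank_pi]
    simp only [Fintype.card_sum, Fintype.card_unit, Fintype.card_fin]
    have : Fintype.card {e : E // t e = i} = (Finset.univ.filter fun e => t e = i).card := by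
      rw [Fintype.card_subtype]
    omega
  have hnli : ¬ LinearIndependent ℝ v := by
    intro hli
    exact absurd hli.fintype_card_le_finrank (by omega)
  rw [Fintype.not_linearIndependent_iff] at hnli
  obtain ⟨g, hg, ⟨ι₀, hι₀⟩⟩ := hnli
  rw [← Matrix.exists_vecMul_eq_zero_iff]
  set y : (Fin n × Fin k) → ℝ := fun r => Sum.elim
    (fun e => if h : t e = i then g (Sum.inl ⟨e, h⟩) else 0)
    (fun j => if j = i then g (Sum.inr ()) else 0) (σ.symm r) with hy
  refine ⟨y, ?_, ?_⟩
  · rcases ι₀ with ⟨e, he⟩ | ⟨⟩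
    · intro hcon
      have := congrFun hcon (σ (Sum.inl e))
      simp only [hy, Equiv.symm_apply_apply, Sum.elim_inl, he, dif_pos, Pi.zero_apply] at this
      exact hι₀ this
    · intro hcon
      have := congrFun hcon (σ (Sum.inr i))
      simp only [hy, Equiv.symm_apply_apply, Sum.elim_inr, if_pos rfl, Pi.zero_apply] at this
      exact hι₀ this
  · funext c
    obtain ⟨w, j⟩ := c
    have hsum : Matrix.vecMul y (realN tail head u σ t) (w, j)
        = ∑ z : E ⊕ Fin k, y (σ z) * realN tail head u σ t (σ z) (w, j) := by
      rw [Matrix.vecMul, dotProduct]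
      exact (Fintype.sum_equiv σ _ _ (fun z => rfl)).symm
    rw [Pi.zero_apply, hsum, Fintype.sum_sum_type]
    simp only [hy, realN, Matrix.of_apply, Equiv.symm_apply_apply, Sum.elim_inl, Sum.elim_inr]
    have htie : ∑ j' : Fin k, (if j' = i then g (Sum.inr ()) else 0) *
        (if ((w, j) : Fin n × Fin k) = (u, j') then 1 else 0)
        = if w = u ∧ j = i then g (Sum.inr ()) else 0 := by
      rw [Finset.sum_congr rfl (g := fun j' => if j' = i then
          (if w = u ∧ j = i then g (Sum.inr ()) else 0) else 0) (fun j' _ => ?_),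
        Finset.sum_ite_eq', if_pos (Finset.mem_univ i)]
      by_cases h1 : j' = i
      · subst h1
        by_cases h2 : w = u ∧ j = j'
        · obtain ⟨rfl, rfl⟩ := h2; simp
        · have : ¬ ((w, j) : Fin n × Fin k) = (u, j') := by
            simp only [Prod.mk.injEq]; exact h2
          simp [h2, this]
      · simp [h1]
    rw [htie]
    by_cases hj : j = i
    · subst hj
      have hgw := congrFun hg w
      rw [Fintype.sum_sum_type] at hgw
      simp only [hv, Sum.elim_inl, Sum.elim_inr, Pi.add_apply, Finset.sum_apply,
        Pi.smul_apply, smul_eq_mul, Pi.zero_apply] at hgw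
      have hE : ∑ e : E, (if h : t e = j then g (Sum.inl ⟨e, h⟩) else 0) *
          (if ((w, j) : Fin n × Fin k) = (tail e, t e) then 1
            else if ((w, j) : Fin n × Fin k) = (head e, t e) then -1 else 0)
          = ∑ e : {e : E // t e = j}, g (Sum.inl e) *
            (if w = tail e.1 then 1 else if w = head e.1 then -1 else 0) := by
      -- restrict to the fiber
        rw [← Finset.sum_filter_add_sum_filter_not Finset.univ (fun e => t e = j)]
      -- second part vanishes
        have h2 : ∑ e ∈ Finset.univ.filter (fun e => ¬ t e = j),
            (if h : t e = j then g (Sum.inl ⟨e, h⟩) else 0) *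
            (if ((w, j) : Fin n × Fin k) = (tail e, t e) then 1
              else if ((w, j) : Fin n × Fin k) = (head e, t e) then -1 else 0) = 0 := by
          apply Finset.sum_eq_zero
          intro e he
          rw [Finset.mem_filter] at he
          rw [dif_neg he.2, zero_mul]
        rw [h2, add_zero]
        rw [Finset.sum_subtype (p := fun e => t e = j)
          (Finset.univ.filter (fun e => t e = j)) (by simp)]
        apply Finset.sum_congr rfl
        intro e _
        rw [dif_pos e.2]
        congr 1
        have h3 : ((w, j) : Fin n × Fin k) = (tail e.1, t e.1) ↔ w = tail e.1 := by
          rw [Prod.mk.injEq]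
          constructor
          · exact fun h => h.1
          · exact fun h => ⟨h, e.2.symm⟩
        have h4 : ((w, j) : Fin n × Fin k) = (head e.1, t e.1) ↔ w = head e.1 := by
          rw [Prod.mk.injEq]
          constructor
          · exact fun h => h.1
          · exact fun h => ⟨h, e.2.symm⟩
        simp only [h3, h4]
      rw [hE]
      have : (if w = u ∧ j = j then g (Sum.inr ()) else 0)
          = g (Sum.inr ()) * (if w = u then 1 else 0) := by
        by_cases h5 : w = u <;> simp [h5]
      rw [this]
      simpa using hgw
    · -- j ≠ i : everything vanishes
      have hz : ∀ e : E, (if h : t e = i then g (Sum.inl ⟨e, h⟩) else 0) *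
          (if ((w, j) : Fin n × Fin k) = (tail e, t e) then 1
            else if ((w, j) : Fin n × Fin k) = (head e, t e) then -1 else 0) = 0 := by
        intro e
        by_cases h1 : t e = i
        · have h3 : ¬ ((w, j) : Fin n × Fin k) = (tail e, t e) := by
            simp only [Prod.mk.injEq, not_and]
            intro _; rw [h1]; exact hj
          have h4 : ¬ ((w, j) : Fin n × Fin k) = (head e, t e) := by
            simp only [Prod.mk.injEq, not_and]
            intro _; rw [h1]; exact hj
          rw [if_neg h3, if_neg h4, mul_zero]
        · rw [dif_neg h1, zero_mul]
      rw [Finset.sum_congr rfl (fun e _ => hz e), Finset.sum_const_zero, zero_add,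
        if_neg (by tauto)]

lemma uni' {m : Type*} [Fintype m] [DecidableEq m] (A : Matrix m m ℝ) (h : ∀ r, RowOK (A r)) :
    A.det = 0 ∨ A.det = 1 ∨ A.det = -1 := by
  classical
  let e := Fintype.equivFin m
  rw [← Matrix.det_submatrix_equiv_self e.symm A]
  exact uni _ _ (fun r => (h (e.symm r)).comp e.symm.injective)

lemma realN_rowOK (t : E → Fin k) (r : Fin n × Fin k) : RowOK (realN tail head u σ t r) := by
  rcases hsr : σ.symm r with e | i
  · refine ⟨fun c => ?_, ?_, ?_⟩
    · simp only [realN, Matrix.of_apply, hsr, Sum.elim_inl]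
      split_ifs <;> simp
    · refine le_trans (Finset.card_le_card (fun c hc => ?_)) (le_of_eq (Finset.card_singleton ((tail e, t e) : Fin n × Fin k)))
      simp only [Finset.mem_filter, Finset.mem_univ, true_and, realN, Matrix.of_apply, hsr,
        Sum.elim_inl] at hc
      rw [Finset.mem_singleton]
      by_contra hne
      rw [if_neg hne] at hc
      split_ifs at hc <;> norm_num at hc
    · refine le_trans (Finset.card_le_card (fun c hc => ?_)) (le_of_eq (Finset.card_singleton ((head e, t e) : Fin n × Fin k)))
      simp only [Finset.mem_filter, Finset.mem_univ, true_and, realN, Matrix.of_apply, hsr,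
        Sum.elim_inl] at hc
      rw [Finset.mem_singleton]
      by_contra hne
      rw [if_neg hne] at hc
      split_ifs at hc <;> norm_num at hc
  · refine ⟨fun c => ?_, ?_, ?_⟩
    · simp only [realN, Matrix.of_apply, hsr, Sum.elim_inr]
      split_ifs <;> simp
    · refine le_trans (Finset.card_le_card (fun c hc => ?_)) (le_of_eq (Finset.card_singleton ((u, i) : Fin n × Fin k)))
      simp only [Finset.mem_filter, Finset.mem_univ, true_and, realN, Matrix.of_apply, hsr,
        Sum.elim_inr] at hc
      rw [Finset.mem_singleton]
      by_contra hne
      rw [if_neg hne] at hc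
      norm_num at hc
    · refine le_trans (Finset.card_le_card (fun c hc => ?_)) (le_of_eq (Finset.card_singleton ((u, i) : Fin n × Fin k)))
      simp only [Finset.mem_filter, Finset.mem_univ, true_and, realN, Matrix.of_apply, hsr,
        Sum.elim_inr] at hc
      rw [Finset.mem_singleton]
      split_ifs at hc <;> norm_num at hc

lemma realN_det_tree (hlt : ∀ e, tail e < head e) (t : E → Fin k)
    (htree : ∀ i : Fin k, IsSpanningTree tail head (Finset.univ.filter fun e => t e = i)) :
    (realN tail head u σ t).det = 1 ∨ (realN tail head u σ t).det = -1 := by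
  rcases uni' _ (realN_rowOK tail head u σ t) with h | h | h
  · exact absurd h (realN_det_ne_zero tail head u σ hlt t (fun i => (htree i).2))
  · exact Or.inl h
  · exact Or.inr h

lemma realN_det_nontree (hlt : ∀ e, tail e < head e) (hn : 1 ≤ n)
    (hE : Fintype.card E = k * n - k) (t : E → Fin k)
    (hnot : ¬ ∀ i : Fin k, IsSpanningTree tail head (Finset.univ.filter fun e => t e = i)) :
    (realN tail head u σ t).det = 0 := by
  push_neg at hnot
  obtain ⟨i, hi⟩ := hnot
  by_cases hall : ∀ i' : Fin k, (Finset.univ.filter fun e => t e = i').card ≤ n - 1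
  · -- all fibers small; then all have card n-1 and fiber i is disconnected
    have hsumcard : ∑ i' : Fin k, (Finset.univ.filter fun e => t e = i').card = k * n - k := by
      rw [← hE, ← Finset.card_univ]
      exact (Finset.card_eq_sum_card_fiberwise (fun x _ => Finset.mem_univ (t x))).symm
    obtain ⟨m, rfl⟩ : ∃ m, n = m + 1 := ⟨n - 1, by omega⟩
    have hmul : k * (m + 1) - k = k * m := by
      have : k * (m + 1) = k * m + k := by ring
      omega
    have hallEq : ∀ i' : Fin k, (Finset.univ.filter fun e => t e = i').card = m := by
      by_contra hcon
      push_neg at hcon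
      obtain ⟨i', hi'⟩ := hcon
      have hlt' : (Finset.univ.filter fun e => t e = i').card < m := by
        have := hall i'
        omega
      have : ∑ i' : Fin k, (Finset.univ.filter fun e => t e = i').card
          < ∑ _i' : Fin k, m :=
        Finset.sum_lt_sum (fun j _ => by have := hall j; omega) ⟨i', Finset.mem_univ i', hlt'⟩
      simp only [Finset.sum_const, Finset.card_univ, Fintype.card_fin, smul_eq_mul] at this
      omega
    have hdis : ¬ (SimpleGraph.fromRel fun v w =>
        ∃ e ∈ Finset.univ.filter (fun e => t e = i), tail e = v ∧ head e = w).Connected := by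
      intro hcon
      exact hi ⟨by simpa using hallEq i, hcon⟩
    exact realN_det_eq_zero_of_disconnected tail head u σ hlt t i hdis
  · push_neg at hall
    obtain ⟨i', hi'⟩ := hall
    exact realN_det_eq_zero_of_big tail head u σ t i' (by omega)

local notation "S" => MvPolynomial (E × Fin k) ℝ

/-- basis rows -/
noncomputable def brow : (E ⊕ Fin k) → Fin k → (Fin n × Fin k) → S :=
  fun z i => Sum.elim
    (fun e c => (C (if c = (tail e, i) then 1 else if c = (head e, i) then (-1:ℝ) else 0) : S))
    (fun j c => (C (if c = (u, j) then (1:ℝ) else 0) : S)) z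

noncomputable def coefS : (E ⊕ Fin k) → Fin k → S :=
  Sum.elim (fun e i => X (e, i)) (fun _ _ => C ((k:ℝ)⁻¹))

lemma expand_pureCond (hk : 1 ≤ k) (hlt : ∀ e, tail e < head e) :
    pureCondBar k tail head id u σ
      = ∑ t : E → Fin k, C ((realN tail head u σ t).det) * ∏ e : E, X (e, t e) := by
  classical
  have hkR : ((k:ℝ)) ≠ 0 := Nat.cast_ne_zero.mpr (by omega)
  set M : Matrix (Fin n × Fin k) (Fin n × Fin k) S := Matrix.of fun r c : (Fin n × Fin k) =>
    Sum.elim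
      (fun e =>
        if (fun _ : E => false) e = true ∧ k ≤ (c.2 : ℕ) then 0
        else if c.1 = tail e then (X (id e, c.2) : S)
        else if c.1 = head e then -X (id e, c.2)
        else 0)
      (fun i => if c = (u, i) then 1 else 0)
      (σ.symm r) with hM
  have hpc : pureCondBar k tail head id u σ = M.det := rfl
  -- row decomposition
  have hrow : M = fun r => ∑ i : Fin k, coefS (σ.symm r) i • brow tail head u (σ.symm r) i := by
    funext r c
    rw [Finset.sum_apply]
    simp only [Pi.smul_apply, smul_eq_mul]
    rcases hsr : σ.symm r with e | j
    · simp only [hM, Matrix.of_apply, hsr, Sum.elim_inl, Bool.false_eq_true, false_and, if_false,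
        id_eq, brow, coefS]
      obtain ⟨v, jc⟩ := c
      simp only
      by_cases hvt : v = tail e
      · have hvh : v ≠ head e := by rw [hvt]; exact (hlt e).ne
        rw [if_pos hvt]
        have hterm : ∀ i ∈ (Finset.univ : Finset (Fin k)),
            X (e, i) * C (if ((v, jc) : Fin n × Fin k) = (tail e, i) then (1:ℝ)
              else if ((v, jc) : Fin n × Fin k) = (head e, i) then -1 else 0)
            = if i = jc then X (e, jc) else 0 := by
          intro i _
          have h1 : ((v, jc) : Fin n × Fin k) = (tail e, i) ↔ i = jc := by
            rw [Prod.mk.injEq]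
            exact ⟨fun h => h.2.symm, fun h => ⟨hvt, h.symm⟩⟩
          have h2 : ¬ ((v, jc) : Fin n × Fin k) = (head e, i) := by
            rw [Prod.mk.injEq]; exact fun h => hvh h.1
          by_cases h3 : i = jc
          · rw [if_pos h3, if_pos (h1.mpr h3), C_1, mul_one, h3]
          · rw [if_neg h3, if_neg (fun h => h3 (h1.mp h)), if_neg h2, C_0, mul_zero]
        rw [Finset.sum_congr rfl hterm, Finset.sum_ite_eq', if_pos (Finset.mem_univ jc)]
      · by_cases hvh : v = head e
        · rw [if_neg hvt, if_pos hvh]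
          have hterm : ∀ i ∈ (Finset.univ : Finset (Fin k)),
              X (e, i) * C (if ((v, jc) : Fin n × Fin k) = (tail e, i) then (1:ℝ)
                else if ((v, jc) : Fin n × Fin k) = (head e, i) then -1 else 0)
              = if i = jc then -X (e, jc) else 0 := by
            intro i _
            have h1 : ((v, jc) : Fin n × Fin k) = (head e, i) ↔ i = jc := by
              rw [Prod.mk.injEq]
              exact ⟨fun h => h.2.symm, fun h => ⟨hvh, h.symm⟩⟩
            have h2 : ¬ ((v, jc) : Fin n × Fin k) = (tail e, i) := by
              rw [Prod.mk.injEq]; exact fun h => hvt h.1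
            by_cases h3 : i = jc
            · rw [if_pos h3, if_neg h2, if_pos (h1.mpr h3), h3, map_neg, C_1, mul_neg, mul_one]
            · rw [if_neg h3, if_neg h2, if_neg (fun h => h3 (h1.mp h)), C_0, mul_zero]
          rw [Finset.sum_congr rfl hterm, Finset.sum_ite_eq', if_pos (Finset.mem_univ jc)]
        · rw [if_neg hvt, if_neg hvh]
          have hterm : ∀ i ∈ (Finset.univ : Finset (Fin k)),
              X (e, i) * C (if ((v, jc) : Fin n × Fin k) = (tail e, i) then (1:ℝ)
                else if ((v, jc) : Fin n × Fin k) = (head e, i) then -1 else 0)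
              = (0 : S) := by
            intro i _
            have h2 : ¬ ((v, jc) : Fin n × Fin k) = (tail e, i) := by
              rw [Prod.mk.injEq]; exact fun h => hvt h.1
            have h3 : ¬ ((v, jc) : Fin n × Fin k) = (head e, i) := by
              rw [Prod.mk.injEq]; exact fun h => hvh h.1
            rw [if_neg h2, if_neg h3, C_0, mul_zero]
          rw [Finset.sum_congr rfl hterm, Finset.sum_const_zero]
    · simp only [hM, Matrix.of_apply, hsr, Sum.elim_inr, brow, coefS]
      rw [Finset.sum_const, Finset.card_univ, Fintype.card_fin, nsmul_eq_mul]
      rw [← map_natCast (C : ℝ →+* S) k, ← map_mul, ← map_mul, ← mul_assoc,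
        mul_inv_cancel₀ hkR, one_mul, apply_ite (C : ℝ →+* S), C_1, C_0]
  -- expand the determinant by multilinearity
  have hbase : ∀ τ : (Fin n × Fin k) → Fin k,
      (fun r => brow tail head u (σ.symm r) (τ r))
        = (RingHom.mapMatrix (C : ℝ →+* S)) (realN tail head u σ (fun e => τ (σ (Sum.inl e)))) := by
    intro τ
    funext r c
    rcases hsr : σ.symm r with e | j
    · have hr : r = σ (Sum.inl e) := by rw [← hsr, Equiv.apply_symm_apply]
      simp only [brow, Sum.elim_inl, RingHom.mapMatrix_apply, Matrix.map_apply, realN,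
        Matrix.of_apply, hsr, hr, Equiv.symm_apply_apply]
    · simp only [brow, Sum.elim_inr, RingHom.mapMatrix_apply, Matrix.map_apply, realN,
        Matrix.of_apply, hsr]
  have hprod : ∀ τ : (Fin n × Fin k) → Fin k,
      ∏ r : Fin n × Fin k, coefS (σ.symm r) (τ r)
        = (∏ e : E, (X (e, τ (σ (Sum.inl e))) : S)) * C ((k:ℝ)⁻¹ ^ k) := by
    intro τ
    rw [← Equiv.prod_comp σ (fun r => coefS (σ.symm r) (τ r))]
    simp only [Equiv.symm_apply_apply]
    rw [Fintype.prod_sum_type]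
    simp only [coefS, Sum.elim_inl, Sum.elim_inr]
    rw [Finset.prod_const, Finset.card_univ, Fintype.card_fin, ← map_pow]
  have hdet : M.det = ∑ τ : (Fin n × Fin k) → Fin k,
      ((∏ e : E, (X (e, τ (σ (Sum.inl e))) : S)) * C ((k:ℝ)⁻¹ ^ k)) *
        C ((realN tail head u σ (fun e => τ (σ (Sum.inl e)))).det) := by
    calc M.det = Matrix.detRowAlternating M := rfl
      _ = (Matrix.detRowAlternating :
            ((Fin n × Fin k) → S) [⋀^(Fin n × Fin k)]→ₗ[S] S).toMultilinearMap
            (fun r => ∑ i : Fin k, coefS (σ.symm r) i • brow tail head u (σ.symm r) i) := by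
          rw [← hrow]; rfl
      _ = ∑ τ : (Fin n × Fin k) → Fin k,
            (Matrix.detRowAlternating :
              ((Fin n × Fin k) → S) [⋀^(Fin n × Fin k)]→ₗ[S] S).toMultilinearMap
              (fun r => coefS (σ.symm r) (τ r) • brow tail head u (σ.symm r) (τ r)) := by
          exact MultilinearMap.map_sum _ _
      _ = ∑ τ : (Fin n × Fin k) → Fin k,
            (∏ r : Fin n × Fin k, coefS (σ.symm r) (τ r)) •
              (Matrix.detRowAlternating :
                ((Fin n × Fin k) → S) [⋀^(Fin n × Fin k)]→ₗ[S] S).toMultilinearMap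
                (fun r => brow tail head u (σ.symm r) (τ r)) := by
          exact Finset.sum_congr rfl (fun τ _ => MultilinearMap.map_smul_univ _ _ _)
      _ = _ := by
          apply Finset.sum_congr rfl
          intro τ _
          rw [hprod τ, smul_eq_mul]
          congr 1
          have : (Matrix.detRowAlternating :
              ((Fin n × Fin k) → S) [⋀^(Fin n × Fin k)]→ₗ[S] S).toMultilinearMap
              (fun r => brow tail head u (σ.symm r) (τ r))
              = Matrix.det (fun r => brow tail head u (σ.symm r) (τ r)) := rfl
          rw [this, hbase τ, ← RingHom.map_det]
  rw [hpc, hdet]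
  -- reindex the sum over all τ by pairs (t, s)
  set Φ : ((E → Fin k) × (Fin k → Fin k)) ≃ ((Fin n × Fin k) → Fin k) :=
    (Equiv.sumArrowEquivProdArrow E (Fin k) (Fin k)).symm.trans
      (Equiv.arrowCongr σ (Equiv.refl (Fin k))) with hΦ
  have hΦap : ∀ (p : (E → Fin k) × (Fin k → Fin k)) (e : E), Φ p (σ (Sum.inl e)) = p.1 e := by
    intro p e
    simp only [hΦ, Equiv.trans_apply, Equiv.arrowCongr_apply, Equiv.coe_refl, Function.comp_apply,
      Equiv.symm_apply_apply, Equiv.sumArrowEquivProdArrow, Equiv.coe_fn_symm_mk, Sum.elim_inl,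
      id_eq]
  rw [← Equiv.sum_comp Φ (fun τ => ((∏ e : E, (X (e, τ (σ (Sum.inl e))) : S)) * C ((k:ℝ)⁻¹ ^ k)) *
        C ((realN tail head u σ (fun e => τ (σ (Sum.inl e)))).det))]
  have hcongr : ∀ p : (E → Fin k) × (Fin k → Fin k),
      ((∏ e : E, (X (e, Φ p (σ (Sum.inl e))) : S)) * C ((k:ℝ)⁻¹ ^ k)) *
        C ((realN tail head u σ (fun e => Φ p (σ (Sum.inl e)))).det)
      = ((∏ e : E, (X (e, p.1 e) : S)) * C ((k:ℝ)⁻¹ ^ k)) *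
        C ((realN tail head u σ p.1).det) := by
    intro p
    have h1 : (fun e => Φ p (σ (Sum.inl e))) = p.1 := funext (fun e => hΦap p e)
    rw [Finset.prod_congr rfl (fun e _ => by rw [hΦap p e]), h1]
  rw [Finset.sum_congr rfl (fun p _ => hcongr p), Fintype.sum_prod_type]
  have hone : ((k : S))^k * C ((k:ℝ)⁻¹ ^ k) = 1 := by
    rw [show ((k:ℕ) : S) = C ((k:ℝ)) from (map_natCast (C : ℝ →+* S) k).symm, ← map_pow,
      ← map_mul, ← mul_pow, mul_inv_cancel₀ hkR, one_pow, C_1]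
  apply Finset.sum_congr rfl
  intro t _
  dsimp only
  rw [Finset.sum_const, Finset.card_univ, Fintype.card_fun, Fintype.card_fin, nsmul_eq_mul,
    Nat.cast_pow]
  calc ((k:S))^k * ((∏ e : E, (X (e, t e) : S)) * C ((k:ℝ)⁻¹ ^ k) *
        C ((realN tail head u σ t).det))
      = (((k:S))^k * C ((k:ℝ)⁻¹ ^ k)) *
        ((∏ e : E, (X (e, t e) : S)) * C ((realN tail head u σ t).det)) := by ring
    _ = C ((realN tail head u σ t).det) * ∏ e : E, X (e, t e) := by
        rw [hone, one_mul, mul_comm]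

end Graph
end Aux

open Classical in
/-- the pure condition of a tied-down graph with `k·n − k` edges is the
signed sum, over all tree decompositions `t : E → Fin k`, of the monomials
`∏ e, X (e, t e)`. -/
theorem stmt6 {n : ℕ} {E : Type} [Fintype E] [DecidableEq E] (k : ℕ) (hk : 1 ≤ k)
    (tail head : E → Fin n) (hlt : ∀ e, tail e < head e)
    (hE : Fintype.card E = k * n - k)
    (u : Fin n) (σ : (E ⊕ Fin k) ≃ (Fin n × Fin k)) :
    ∃ ε : (E → Fin k) → ℝ,
      (∀ t : E → Fin k,
        (∀ i : Fin k, IsSpanningTree tail head (Finset.univ.filter fun e => t e = i)) →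
          (ε t = 1 ∨ ε t = -1)) ∧
      pureCondBar k tail head id u σ =
        ∑ t ∈ Finset.univ.filter (fun t : E → Fin k =>
            ∀ i : Fin k, IsSpanningTree tail head (Finset.univ.filter fun e => t e = i)),
          C (ε t) * ∏ e : E, X (e, t e) := by
  classical
  have hn : 1 ≤ n := u.pos
  refine ⟨fun t => (realN tail head u σ t).det, ?_, ?_⟩
  · intro t ht
    exact realN_det_tree tail head u σ hlt t ht
  · rw [expand_pureCond tail head u σ hk hlt]
    refine (Finset.sum_subset (Finset.filter_subset _ _) (fun t _ hnt => ?_)).symm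
    rw [Finset.mem_filter] at hnt
    have hnot : ¬ ∀ i : Fin k, IsSpanningTree tail head (Finset.univ.filter fun e => t e = i) := by
      intro hcon
      exact hnt ⟨Finset.mem_univ t, hcon⟩
    rw [realN_det_nontree tail head u σ hlt hn hE t hnot, C_0, zero_mul]
end
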